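/- arXiv:2507.04988 — 5 statements merged into one kernel-verified Lean document; each statement's English description precedes it below -/
import Mathlib

section
/- For the free discrete Laplacian on ℓ²(ℤ^d), the double commutator satisfies the operator identity [-Δ, [-Δ, -Q²]] = 2 Σ_{j=1}^d (4·I - Δ_j²), where both sides are applied to vectors in ℋ²(ℤ^d). -/
open MeasureTheory
noncomputable section

/-- The lattice `ℤ^d`. -/
abbrev Zd (d : ℕ) := Fin d → ℤ

/-- The Hilbert space `ℓ²(ℤ^d)` of square-summable complex sequences. -/
abbrev Lp2 (d : ℕ) := lp (fun _ : Zd d => ℂ) 2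

variable {d : ℕ}

/-- The weight `1 + |n|²`. -/
def wt (n : Zd d) : ℝ := 1 + ∑ j, ((n j : ℝ)) ^ 2

/-- The canonical basis vector `e_j` of `ℤ^d`. -/
def eVec (d : ℕ) (j : Fin d) : Zd d := Pi.single j 1

/-- `u ∈ ℋʳ(ℤ^d)`, i.e. `∑ (1+|n|²)^r |u n|² < ∞`. -/
def memW (r : ℝ) (u : Lp2 d) : Prop :=
  Summable (fun n : Zd d => wt n ^ r * ‖u n‖ ^ 2)

/-- The weighted norm `‖u‖_r = (∑ (1+|n|²)^r |u n|²)^{1/2}`. -/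
def wnorm (r : ℝ) (u : Lp2 d) : ℝ :=
  Real.sqrt (∑' n : Zd d, wt n ^ r * ‖u n‖ ^ 2)

/-- Pointwise discrete Laplacian `(Δf)(n) = ∑_j (f(n+e_j) + f(n-e_j))`. -/
def lapFun (f : Zd d → ℂ) : Zd d → ℂ :=
  fun n => ∑ j, (f (n + eVec d j) + f (n - eVec d j))

/-- Pointwise one-direction Laplacian `(Δ_j f)(n) = f(n+e_j) + f(n-e_j)`. -/
def lapjFun (j : Fin d) (f : Zd d → ℂ) : Zd d → ℂ :=
  fun n => f (n + eVec d j) + f (n - eVec d j)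

/-- `V_n = o(|n|^{-1})` as `|n| → ∞`, i.e. `|n|·V_n → 0`. -/
def DecayV (V : Zd d → ℝ) : Prop :=
  Filter.Tendsto (fun n : Zd d => Real.sqrt (∑ j, ((n j : ℝ)) ^ 2) * V n)
    Filter.cofinite (nhds 0)

/-- `Hop` acts as the Schrödinger operator `-Δ + V`. -/
def IsSchrodinger (V : Zd d → ℝ) (Hop : Lp2 d →L[ℂ] Lp2 d) : Prop :=
  ∀ (u : Lp2 d) (n : Zd d), Hop u n = -(lapFun (⇑u) n) + (V n : ℂ) * u n

/-- The spectral data (projection-valued measure and associated scalar spectral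
measures) of a bounded self-adjoint operator `H` on `ℓ²(ℤ^d)`.  The moment
conditions pin the scalar measures (hence the projections on Borel sets)
down uniquely. -/
structure SpectralData (d : ℕ) (H : Lp2 d →L[ℂ] Lp2 d) where
  P : Set ℝ → (Lp2 d →L[ℂ] Lp2 d)
  μ : Lp2 d → Measure ℝ
  P_sa : ∀ I, IsSelfAdjoint (P I)
  P_inter : ∀ I J, P (I ∩ J) = (P I).comp (P J)
  P_univ : P Set.univ = 1
  P_empty : P (∅ : Set ℝ) = 0
  μ_finite : ∀ u, IsFiniteMeasure (μ u)
  μ_eq : ∀ (u : Lp2 d) (B : Set ℝ), MeasurableSet B →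
    μ u B = ENNReal.ofReal (inner ℂ u (P B u) : ℂ).re
  moment_int : ∀ (u : Lp2 d) (k : ℕ), Integrable (fun x : ℝ => x ^ k) (μ u)
  moment : ∀ (u : Lp2 d) (k : ℕ),
    (inner ℂ u ((H ^ k) u) : ℂ).re = ∫ x, x ^ k ∂(μ u)

/-- The Schrödinger time evolution `e^{-itH}` of a bounded operator. -/
def evol (H : Lp2 d →L[ℂ] Lp2 d) (t : ℝ) : Lp2 d →L[ℂ] Lp2 d :=
  NormedSpace.exp ((-(t : ℂ) * Complex.I) • H)

/-- The commutator `[Q,H]`, defined on `ℋ¹(ℤ^d)`, extends to a bounded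
operator on `ℓ²(ℤ^d)`. -/
def QHBounded (H : Lp2 d →L[ℂ] Lp2 d) : Prop :=
  ∃ B : Lp2 d →L[ℂ] Lp2 d, ∀ (u Qu : Lp2 d),
    (∀ n, Qu n = (Real.sqrt (wt n) : ℂ) * u n) →
    ∀ n, B u n = (Real.sqrt (wt n) : ℂ) * (H u) n - (H Qu) n

/-- The quadratic form of the double commutator `[H,[H,-Q²]]` at `v`:
`⟪v, [H,[H,-Q²]] v⟫ = 2‖Q H v‖² - 2 Re ⟪Q v, Q H² v⟫`. -/
def dcForm (H : Lp2 d →L[ℂ] Lp2 d) (v : Lp2 d) : ℝ :=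
  2 * (∑' n : Zd d, wt n * ‖(H v) n‖ ^ 2)
    - 2 * (∑' n : Zd d, (wt n : ℂ) * (starRingEnd ℂ) (v n) * ((H (H v)) n)).re

/-- The (real) spectrum of a bounded operator on `ℓ²(ℤ^d)`. -/
def realSpec (H : Lp2 d →L[ℂ] Lp2 d) : Set ℝ :=
  {x : ℝ | (x : ℂ) ∈ spectrum ℂ H}

lemma wt_add (m : Zd d) (j : Fin d) : wt (m + eVec d j) = wt m + 2 * (m j : ℝ) + 1 := by
  simp only [wt]
  have h : ∀ i ∈ Finset.univ, (((m + eVec d j) i : ℤ) : ℝ)^2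
      = ((m i:ℝ))^2 + if i = j then 2*(m i:ℝ)+1 else 0 := by
    intro i _; by_cases h : i = j <;>
      simp [h, eVec, Pi.single_apply] <;> push_cast <;> ring
  rw [Finset.sum_congr rfl h, Finset.sum_add_distrib, Finset.sum_ite_eq' Finset.univ j]
  simp; ring

lemma wt_sub (m : Zd d) (j : Fin d) : wt (m - eVec d j) = wt m - 2 * (m j : ℝ) + 1 := by
  simp only [wt]
  have h : ∀ i ∈ Finset.univ, (((m - eVec d j) i : ℤ) : ℝ)^2
      = ((m i:ℝ))^2 + if i = j then -(2*(m i:ℝ))+1 else 0 := by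
    intro i _; by_cases h : i = j <;>
      simp [h, eVec, Pi.single_apply] <;> push_cast <;> ring
  rw [Finset.sum_congr rfl h, Finset.sum_add_distrib, Finset.sum_ite_eq' Finset.univ j]
  simp; ring

/-- identity (2.5). For the free discrete Laplacian,
`[-Δ, [-Δ, -Q²]] = 2 ∑_{j=1}^d (4·I - Δ_j²)` on vectors of `ℋ²(ℤ^d)`;
here the left-hand side is `-Δ²Q²u + 2ΔQ²Δu - Q²Δ²u` evaluated pointwise. -/
theorem double_commutator_free_laplacian
    (d : ℕ) (hd : 1 ≤ d) (u : Lp2 d) (hu : memW 2 u) (n : Zd d) :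
    -(lapFun (lapFun (fun m => (wt m : ℂ) * u m)) n)
      + 2 * lapFun (fun m => (wt m : ℂ) * lapFun (⇑u) m) n
      - (wt n : ℂ) * lapFun (lapFun (⇑u)) n
    = 2 * ∑ j : Fin d, (4 * u n - lapjFun j (lapjFun j (⇑u)) n) := by
  set f : Zd d → ℂ := ⇑u with hf
  set e : Fin d → Zd d := eVec d with he
  set w : Zd d → ℂ := fun m => ((wt m : ℝ) : ℂ) with hw
  have hwp : ∀ (m : Zd d) (j : Fin d), w (m + e j) = w m + 2 * ((m j : ℤ) : ℂ) + 1 := by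
    intro m j; simp only [hw, he, wt_add]; push_cast; ring
  have hwm : ∀ (m : Zd d) (j : Fin d), w (m - e j) = w m - 2 * ((m j : ℤ) : ℂ) + 1 := by
    intro m j; simp only [hw, he, wt_sub]; push_cast; ring
  set C : Fin d → Fin d → ℂ := fun j k =>
      (-(w (n+e j+e k)) + 2*w (n+e j) - w n) * f (n+e j+e k)
    + (-(w (n+e j-e k)) + 2*w (n+e j) - w n) * f (n+e j-e k)
    + (-(w (n-e j+e k)) + 2*w (n-e j) - w n) * f (n-e j+e k)
    + (-(w (n-e j-e k)) + 2*w (n-e j) - w n) * f (n-e j-e k) with hC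
  have h1 : -(lapFun (lapFun (fun m => (wt m : ℂ) * u m)) n)
      + 2 * lapFun (fun m => (wt m : ℂ) * lapFun (⇑u) m) n
      - (wt n : ℂ) * lapFun (lapFun (⇑u)) n
      = ∑ j, ∑ k, C j k := by
    simp only [lapFun, hC, Finset.mul_sum, ← Finset.sum_neg_distrib,
      ← Finset.sum_add_distrib, ← Finset.sum_sub_distrib]
    refine Finset.sum_congr rfl fun j _ => ?_
    simp only [Finset.mul_sum, mul_add, add_mul, ← Finset.sum_neg_distrib,
      ← Finset.sum_add_distrib, ← Finset.sum_sub_distrib]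
    refine Finset.sum_congr rfl fun k _ => ?_
    simp only [hw, hf, he]
    ring
  have key : ∀ j k, C j k + C k j = if j = k then 2 * C j j else 0 := by
    intro j k
    by_cases hjk : j = k
    · subst hjk; simp [two_mul]
    · simp only [if_neg hjk]
      have hkj : k ≠ j := Ne.symm hjk
      have evp : ∀ (m : Zd d) (i i' : Fin d), i ≠ i' → ((m + e i) i' : ℤ) = m i' := by
        intro m i i' h; simp [he, eVec, Pi.single_apply, Ne.symm h]
      have evm : ∀ (m : Zd d) (i i' : Fin d), i ≠ i' → ((m - e i) i' : ℤ) = m i' := by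
        intro m i i' h; simp [he, eVec, Pi.single_apply, Ne.symm h]
      have p1 : n + e k + e j = n + e j + e k := by ring
      have p2 : n + e k - e j = n - e j + e k := by ring
      have p3 : n - e k + e j = n + e j - e k := by ring
      have p4 : n - e k - e j = n - e j - e k := by ring
      simp only [hC, p1, p2, p3, p4,
        hwp (n + e j) k, hwm (n + e j) k, hwp (n - e j) k, hwm (n - e j) k,
        hwp (n + e k) j, hwm (n + e k) j, hwp (n - e k) j, hwm (n - e k) j,
        hwp n j, hwm n j, hwp n k, hwm n k,
        evp n j k hjk, evm n j k hjk, evp n k j hkj, evm n k j hkj]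
      ring
  have h2 : (2:ℂ) * ∑ j, ∑ k, C j k = 2 * ∑ j, C j j := by
    calc (2:ℂ) * ∑ j, ∑ k, C j k
        = (∑ j, ∑ k, C j k) + ∑ j, ∑ k, C k j := by
          rw [two_mul]; congr 1; exact Finset.sum_comm
      _ = ∑ j, ∑ k, (C j k + C k j) := by
          simp [Finset.sum_add_distrib]
      _ = ∑ j, ∑ k, (if j = k then 2 * C j j else 0) := by
          simp only [key]
      _ = ∑ j, 2 * C j j := by
          refine Finset.sum_congr rfl fun j _ => ?_
          simp
      _ = 2 * ∑ j, C j j := by rw [Finset.mul_sum]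
  have h3 : ∑ j, ∑ k, C j k = ∑ j, C j j :=
    mul_left_cancel₀ (two_ne_zero) h2
  rw [h1, h3, Finset.mul_sum]
  refine Finset.sum_congr rfl fun j _ => ?_
  have q1 : n + e j - e j = n := by ring
  have q2 : n - e j + e j = n := by ring
  have evj : ((n + e j) j : ℤ) = n j + 1 := by
    simp [he, eVec, Pi.single_apply]
  simp only [lapjFun, hC, q1, q2, hwp (n + e j) j, hwm (n - e j) j,
    hwp n j, hwm n j, evj]
  have evj' : (((n - e j) j : ℤ) : ℂ) = (n j : ℂ) - 1 := by
    simp [he, eVec, Pi.single_apply]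
  rw [evj']
  simp only [hf, ← he]
  push_cast
  ring
end
end

section
/- For the free discrete Laplacian -Δ on ℓ²(ℤ^d), for every nonzero u ∈ ℋ¹(ℤ^d) there exists a constant c > 0, independent of t, such that ‖e^{itΔ}u‖₁ / t > c for all t > 0. -/
open MeasureTheory
noncomputable section

variable {d : ℕ}

namespace Ballistic

open Complex
open scoped ENNReal NNReal

variable {d : ℕ}

lemma one_le_wt (n : Zd d) : 1 ≤ wt n := by
  have : (0:ℝ) ≤ ∑ j, ((n j : ℝ))^2 := Finset.sum_nonneg fun j _ => sq_nonneg _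
  simp [wt]; linarith

lemma wt_pos (n : Zd d) : 0 < wt n := lt_of_lt_of_le one_pos (one_le_wt n)

lemma summable_sq (v : Lp2 d) : Summable (fun n : Zd d => ‖v n‖^2) := by
  have h := (lp.memℓp v).summable (p := 2) (by norm_num)
  have : ∀ n : Zd d, ‖v n‖ ^ (2:ℝ≥0∞).toReal = ‖v n‖ ^ 2 := by
    intro n
    rw [show (2:ℝ≥0∞).toReal = ((2:ℕ):ℝ) by norm_num, Real.rpow_natCast]
  simpa [this] using h

lemma mem2_of_summable {f : Zd d → ℂ} (h : Summable fun n => ‖f n‖^2) : Memℓp f 2 := by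
  apply memℓp_gen
  have : ∀ n : Zd d, ‖f n‖ ^ (2:ℝ≥0∞).toReal = ‖f n‖ ^ 2 := by
    intro n
    rw [show (2:ℝ≥0∞).toReal = ((2:ℕ):ℝ) by norm_num, Real.rpow_natCast]
  simpa [this] using h

lemma summable_sq_shift (v : Lp2 d) (a : Zd d) :
    Summable (fun n : Zd d => ‖v (n + a)‖^2) :=
  ((Equiv.addRight a).summable_iff (f := fun n : Zd d => ‖v n‖^2)).2 (summable_sq v)

/-- `X_j f`. -/
def Xf (j : Fin d) (f : Zd d → ℂ) : Zd d → ℂ := fun n => ((n j : ℂ)) * f n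

/-- `A_j f = [X_j, Δ] f`. -/
def Af (j : Fin d) (f : Zd d → ℂ) : Zd d → ℂ :=
  fun n => f (n - eVec d j) - f (n + eVec d j)

lemma memℓp_Af (v : Lp2 d) (j : Fin d) : Memℓp (Af j ⇑v) 2 := by
  apply mem2_of_summable
  have h1 := summable_sq_shift v (-eVec d j)
  have h2 := summable_sq_shift v (eVec d j)
  apply Summable.of_nonneg_of_le (fun n => sq_nonneg _)
    (fun n => ?_) (((h1.add h2).mul_left 2))
  have hb : ‖Af j (⇑v) n‖ ≤ ‖v (n + -eVec d j)‖ + ‖v (n + eVec d j)‖ := by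
    simpa [Af, sub_eq_add_neg] using norm_sub_le (v (n + -eVec d j)) (v (n + eVec d j))
  have h0 : (0:ℝ) ≤ ‖Af j (⇑v) n‖ := norm_nonneg _
  nlinarith [sq_nonneg (‖v (n + -eVec d j)‖ - ‖v (n + eVec d j)‖), norm_nonneg (v (n + -eVec d j)), norm_nonneg (v (n + eVec d j))]

lemma memℓp_Xf (u : Lp2 d) (hu : memW 1 u) (j : Fin d) : Memℓp (Xf j ⇑u) 2 := by
  apply mem2_of_summable
  have hsum : Summable (fun n : Zd d => wt n * ‖u n‖^2) := by
    simpa [memW, Real.rpow_one] using hu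
  apply Summable.of_nonneg_of_le (fun n => sq_nonneg _) (fun n => ?_) hsum
  have h1 : ‖Xf j (⇑u) n‖^2 = ((n j : ℝ))^2 * ‖u n‖^2 := by
    rw [Xf, norm_mul, mul_pow]
    congr 1
    rw [show ((n j : ℂ)) = (((n j : ℝ)) : ℂ) by push_cast; ring, Complex.norm_real,
      Real.norm_eq_abs]
    exact sq_abs _
  rw [h1]
  have h2 : ((n j : ℝ))^2 ≤ wt n := by
    have h3 : ((n j:ℝ))^2 ≤ ∑ i, ((n i:ℝ))^2 :=
      Finset.single_le_sum (f := fun i => ((n i : ℝ))^2)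
        (fun i _ => sq_nonneg _) (Finset.mem_univ j)
    simp only [wt]; linarith
  have := sq_nonneg ‖u n‖
  nlinarith [sq_nonneg ‖u n‖]

end Ballistic

namespace Ballistic
open Complex
open scoped ENNReal NNReal ComplexConjugate InnerProductSpace
variable {d : ℕ}

/-- `X_j u` as an element of `ℓ²`. -/
def XL (j : Fin d) (u : Lp2 d) (hu : memW 1 u) : Lp2 d := ⟨Xf j ⇑u, memℓp_Xf u hu j⟩

/-- `A_j u` as an element of `ℓ²`. -/
def AL (j : Fin d) (u : Lp2 d) : Lp2 d := ⟨Af j ⇑u, memℓp_Af u j⟩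

@[simp] lemma XL_apply (j : Fin d) (u : Lp2 d) (hu : memW 1 u) (n : Zd d) :
    (XL j u hu) n = (n j : ℂ) * u n := rfl

@[simp] lemma AL_apply (j : Fin d) (u : Lp2 d) (n : Zd d) :
    (AL j u) n = u (n - eVec d j) - u (n + eVec d j) := rfl

lemma summable_conj_mul_shift (x y : Lp2 d) (a b : Zd d) :
    Summable fun n : Zd d => conj (x (n + a)) * y (n + b) := by
  apply Summable.of_norm
  have hx := summable_sq_shift x a
  have hy := summable_sq_shift y b
  apply Summable.of_nonneg_of_le (fun n => norm_nonneg _)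
    (fun n => ?_) ((hx.add hy).mul_left (1/2 : ℝ))
  rw [norm_mul, RCLike.norm_conj]
  nlinarith [sq_nonneg (‖x (n+a)‖ - ‖y (n+b)‖), norm_nonneg (x (n+a)), norm_nonneg (y (n+b))]

lemma tsum_shift_pair (x y : Lp2 d) (a : Zd d) :
    ∑' n : Zd d, conj (x (n + a)) * y n = ∑' n : Zd d, conj (x n) * y (n + (-a)) := by
  have h := (Equiv.addRight a).tsum_eq (f := fun m : Zd d => conj (x m) * y (m + (-a)))
  rw [← h]
  congr 1 with n
  simp [Equiv.coe_addRight]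

lemma inner_eq (x y : Lp2 d) : ⟪x, y⟫_ℂ = ∑' n : Zd d, conj (x n) * y n := by
  rw [lp.inner_eq_tsum]
  congr 1; funext n; rw [RCLike.inner_apply]; ring

lemma lap_symm (Δop : Lp2 d →L[ℂ] Lp2 d)
    (hΔ : ∀ (u : Lp2 d) (n : Zd d), Δop u n = lapFun (⇑u) n)
    (x y : Lp2 d) : ⟪Δop x, y⟫_ℂ = ⟪x, Δop y⟫_ℂ := by
  rw [inner_eq, inner_eq]
  have hL : ∀ n : Zd d, conj ((Δop x) n) * y n
      = ∑ j, (conj (x (n + eVec d j)) * y n + conj (x (n + -eVec d j)) * y n) := by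
    intro n
    rw [hΔ, lapFun, map_sum, Finset.sum_mul]
    congr 1 with j
    rw [map_add, sub_eq_add_neg]
    ring
  have hR : ∀ n : Zd d, conj (x n) * (Δop y) n
      = ∑ j, (conj (x n) * y (n + eVec d j) + conj (x n) * y (n + -eVec d j)) := by
    intro n
    rw [hΔ, lapFun, Finset.mul_sum]
    congr 1 with j
    rw [sub_eq_add_neg]
    ring
  calc ∑' n : Zd d, conj ((Δop x) n) * y n
      = ∑ j, ∑' n : Zd d, (conj (x (n + eVec d j)) * y n + conj (x (n + -eVec d j)) * y n) := by
        rw [← Summable.tsum_finsetSum]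
        · exact tsum_congr hL
        · intro j _
          apply Summable.add
          · simpa using summable_conj_mul_shift x y (eVec d j) 0
          · simpa using summable_conj_mul_shift x y (-eVec d j) 0
    _ = ∑ j, ∑' n : Zd d, (conj (x n) * y (n + eVec d j) + conj (x n) * y (n + -eVec d j)) := by
        congr 1 with j
        have s1 : Summable fun n : Zd d => conj (x (n + eVec d j)) * y n := by
          simpa using summable_conj_mul_shift x y (eVec d j) 0
        have s2 : Summable fun n : Zd d => conj (x (n + -eVec d j)) * y n := by
          simpa using summable_conj_mul_shift x y (-eVec d j) 0
        have s3 : Summable fun n : Zd d => conj (x n) * y (n + eVec d j) := by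
          simpa using summable_conj_mul_shift x y 0 (eVec d j)
        have s4 : Summable fun n : Zd d => conj (x n) * y (n + -eVec d j) := by
          simpa using summable_conj_mul_shift x y 0 (-eVec d j)
        rw [Summable.tsum_add s1 s2, Summable.tsum_add s3 s4]
        rw [tsum_shift_pair x y (eVec d j), tsum_shift_pair x y (-eVec d j)]
        simp [add_comm]
    _ = ∑' n : Zd d, conj (x n) * (Δop y) n := by
        rw [← Summable.tsum_finsetSum]
        · exact (tsum_congr hR).symm
        · intro j _
          apply Summable.add
          · simpa using summable_conj_mul_shift x y 0 (eVec d j)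
          · simpa using summable_conj_mul_shift x y 0 (-eVec d j)

lemma lap_sa (Δop : Lp2 d →L[ℂ] Lp2 d)
    (hΔ : ∀ (u : Lp2 d) (n : Zd d), Δop u n = lapFun (⇑u) n) :
    IsSelfAdjoint Δop := by
  rw [ContinuousLinearMap.isSelfAdjoint_iff_isSymmetric]
  intro x y
  exact lap_symm Δop hΔ x y

end Ballistic

namespace Ballistic
open Complex
open scoped ENNReal NNReal ComplexConjugate InnerProductSpace
variable {d : ℕ}

set_option synthInstance.maxHeartbeats 1000000 in
lemma exp_inner (Δop : Lp2 d →L[ℂ] Lp2 d) (hsa : IsSelfAdjoint Δop) (t : ℝ) (p q : Lp2 d) :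
    ⟪NormedSpace.exp (((t:ℂ) * Complex.I) • Δop) p,
     NormedSpace.exp (((t:ℂ) * Complex.I) • Δop) q⟫_ℂ = ⟪p, q⟫_ℂ := by
  set T : Lp2 d →L[ℂ] Lp2 d := ((t:ℂ) * Complex.I) • Δop with hT
  set E := NormedSpace.exp T with hE
  have hstarT : star T = -T := by
    rw [hT, star_smul, hsa.star_eq]
    rw [show star ((t:ℂ) * Complex.I) = -((t:ℂ) * Complex.I) by
      simp [Complex.star_def, Complex.conj_I]]
    rw [neg_smul]
  have hstarE : star E = NormedSpace.exp (-T) := by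
    rw [hE, NormedSpace.star_exp, hstarT]
  have hprod : star E * E = 1 := by
    rw [hstarE, ← NormedSpace.exp_add_of_commute_of_mem_ball (𝕂 := ℂ) (Commute.refl T).neg_left
      ((NormedSpace.expSeries_radius_eq_top ℂ (Lp2 d →L[ℂ] Lp2 d)).symm ▸ edist_lt_top _ _)
      ((NormedSpace.expSeries_radius_eq_top ℂ (Lp2 d →L[ℂ] Lp2 d)).symm ▸ edist_lt_top _ _)]
    simp [NormedSpace.exp_zero]
  have h1 : ⟪E p, E q⟫_ℂ = ⟪p, (ContinuousLinearMap.adjoint E) (E q)⟫_ℂ :=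
    (ContinuousLinearMap.adjoint_inner_right E p (E q)).symm
  rw [h1, ← ContinuousLinearMap.star_eq_adjoint]
  have : (star E) (E q) = (star E * E) q := rfl
  rw [this, hprod]
  rfl

lemma exp_norm_eq (Δop : Lp2 d →L[ℂ] Lp2 d) (hsa : IsSelfAdjoint Δop) (t : ℝ) (p : Lp2 d) :
    ‖NormedSpace.exp (((t:ℂ) * Complex.I) • Δop) p‖ = ‖p‖ := by
  have h := exp_inner Δop hsa t p p
  have h1 := inner_self_eq_norm_sq (𝕜 := ℂ)
    (NormedSpace.exp (((t:ℂ) * Complex.I) • Δop) p)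
  have h2 := inner_self_eq_norm_sq (𝕜 := ℂ) p
  have : ‖NormedSpace.exp (((t:ℂ) * Complex.I) • Δop) p‖^2 = ‖p‖^2 := by
    rw [← h1, ← h2, h]
  have hn := norm_nonneg (NormedSpace.exp (((t:ℂ) * Complex.I) • Δop) p)
  nlinarith [norm_nonneg p]

/-- Evaluation at a point as a continuous linear map on `ℓ²`. -/
def evalCLM (n : Zd d) : Lp2 d →L[ℂ] ℂ :=
  LinearMap.mkContinuous
    { toFun := fun v : Lp2 d => v n
      map_add' := fun v w => by
        show (v + w : Lp2 d) n = (v : Zd d → ℂ) n + (w : Zd d → ℂ) n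
        rw [lp.coeFn_add]; rfl
      map_smul' := fun c v => by
        show (c • v : Lp2 d) n = c • (v : Zd d → ℂ) n
        rw [lp.coeFn_smul]; rfl } 1
    (fun v => by
      simpa using lp.norm_apply_le_norm (by norm_num : (2:ℝ≥0∞) ≠ 0) v n)

@[simp] lemma evalCLM_apply (n : Zd d) (v : Lp2 d) : evalCLM n v = v n := rfl

lemma exp_apply_pt (T : Lp2 d →L[ℂ] Lp2 d) (v : Lp2 d) (n : Zd d) :
    (NormedSpace.exp T) v n = ∑' k : ℕ, ((k.factorial : ℂ)⁻¹ • ((T ^ k) v n)) := by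
  have hsum : Summable fun k : ℕ => ((k.factorial : ℂ)⁻¹) • T ^ k :=
    NormedSpace.expSeries_summable' T
  have h1 : (NormedSpace.exp T) v = ∑' k : ℕ, ((k.factorial : ℂ)⁻¹ • (T ^ k)) v := by
    rw [NormedSpace.exp_eq_tsum ℂ]
    exact ((ContinuousLinearMap.apply ℂ (Lp2 d) v).map_tsum hsum)
  have hsum2 : Summable fun k : ℕ => ((k.factorial : ℂ)⁻¹ • (T ^ k)) v :=
    hsum.map (ContinuousLinearMap.apply ℂ (Lp2 d) v) (ContinuousLinearMap.apply ℂ (Lp2 d) v).continuous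
  calc (NormedSpace.exp T) v n = evalCLM n ((NormedSpace.exp T) v) := rfl
    _ = ∑' k : ℕ, evalCLM n (((k.factorial : ℂ)⁻¹ • (T ^ k)) v) := by
        rw [h1]; exact (evalCLM n).map_tsum hsum2
    _ = ∑' k : ℕ, ((k.factorial : ℂ)⁻¹ • ((T ^ k) v n)) := by
        apply tsum_congr; intro k
        rw [ContinuousLinearMap.smul_apply]
        rw [show evalCLM n ((k.factorial : ℂ)⁻¹ • ((T ^ k) v)) = ((k.factorial : ℂ)⁻¹ • ((T ^ k) v)) n from rfl]
        rw [lp.coeFn_smul]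
        rfl

end Ballistic

namespace Ballistic
open Complex
open scoped ENNReal NNReal ComplexConjugate InnerProductSpace
variable {d : ℕ}

lemma X_lap (j : Fin d) (f : Zd d → ℂ) (n : Zd d) :
    (n j : ℂ) * lapFun f n = lapFun (Xf j f) n + Af j f n := by
  have key : ∀ i : Fin d, Xf j f (n + eVec d i) + Xf j f (n - eVec d i)
      = (n j : ℂ) * (f (n + eVec d i) + f (n - eVec d i))
        + (if j = i then f (n + eVec d i) - f (n - eVec d i) else 0) := by
    intro i
    simp only [Xf, eVec, Pi.add_apply, Pi.sub_apply, Pi.single_apply]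
    push_cast
    split_ifs with h
    · ring
    · ring
  have expand : lapFun (Xf j f) n
      = (n j : ℂ) * lapFun f n + (f (n + eVec d j) - f (n - eVec d j)) := by
    calc lapFun (Xf j f) n
        = ∑ i, (Xf j f (n + eVec d i) + Xf j f (n - eVec d i)) := rfl
      _ = ∑ i, ((n j : ℂ) * (f (n + eVec d i) + f (n - eVec d i))
            + (if j = i then f (n + eVec d i) - f (n - eVec d i) else 0)) :=
          Finset.sum_congr rfl (fun i _ => key i)
      _ = (n j : ℂ) * lapFun f n + (f (n + eVec d j) - f (n - eVec d j)) := by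
          rw [Finset.sum_add_distrib, ← Finset.mul_sum, Finset.sum_ite_eq]
          simp [lapFun]
  rw [expand, Af]
  ring

lemma lap_Af_comm (j : Fin d) (f : Zd d → ℂ) :
    lapFun (Af j f) = Af j (lapFun f) := by
  funext n
  simp only [lapFun, Af]
  rw [← Finset.sum_sub_distrib]
  congr 1 with i
  have e1 : n + eVec d i - eVec d j = n - eVec d j + eVec d i := by abel
  have e2 : n - eVec d i - eVec d j = n - eVec d j - eVec d i := by abel
  have e3 : n + eVec d i + eVec d j = n + eVec d j + eVec d i := by abel
  have e4 : n - eVec d i + eVec d j = n + eVec d j - eVec d i := by abel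
  rw [e1, e2, e3, e4]
  ring

lemma lap_add (f g : Zd d → ℂ) : lapFun (f + g) = lapFun f + lapFun g := by
  funext n
  simp [lapFun, Finset.sum_add_distrib]
  ring

lemma lap_iter_add (k : ℕ) (f g : Zd d → ℂ) :
    lapFun^[k] (f + g) = lapFun^[k] f + lapFun^[k] g := by
  induction k with
  | zero => rfl
  | succ k ih =>
    rw [Function.iterate_succ_apply', ih, lap_add,
      Function.iterate_succ_apply' lapFun k f, Function.iterate_succ_apply' lapFun k g]

lemma X_lap_fun (j : Fin d) (f : Zd d → ℂ) :
    Xf j (lapFun f) = lapFun (Xf j f) + Af j f := by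
  funext n
  exact X_lap j f n

lemma X_lap_iter (j : Fin d) :
    ∀ (k : ℕ) (f : Zd d → ℂ) (n : Zd d),
      (n j : ℂ) * (lapFun^[k+1] f) n
        = (lapFun^[k+1] (Xf j f)) n + ((k : ℂ) + 1) * (lapFun^[k] (Af j f)) n := by
  intro k
  induction k with
  | zero =>
    intro f n
    simpa using X_lap j f n
  | succ k ih =>
    intro f n
    have h1 : lapFun^[k+2] f = lapFun^[k+1] (lapFun f) := Function.iterate_succ_apply lapFun (k+1) f
    rw [h1, ih (lapFun f) n, X_lap_fun, lap_iter_add, ← lap_Af_comm]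
    have h2 : lapFun^[k+1] (lapFun (Xf j f)) = lapFun^[k+2] (Xf j f) :=
      (Function.iterate_succ_apply lapFun (k+1) (Xf j f)).symm
    have h3 : lapFun^[k] (lapFun (Af j f)) = lapFun^[k+1] (Af j f) :=
      (Function.iterate_succ_apply lapFun k (Af j f)).symm
    rw [Pi.add_apply, h2, h3]
    push_cast
    ring

lemma coe_pow (Δop : Lp2 d →L[ℂ] Lp2 d)
    (hΔ : ∀ (u : Lp2 d) (n : Zd d), Δop u n = lapFun (⇑u) n)
    (k : ℕ) (v : Lp2 d) (n : Zd d) : (Δop ^ k) v n = lapFun^[k] (⇑v) n := by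
  induction k generalizing n with
  | zero => rfl
  | succ k ih =>
    have h1 : (Δop ^ (k+1)) v = Δop ((Δop ^ k) v) := by
      rw [pow_succ']; rfl
    have hc : ⇑((Δop ^ k) v) = lapFun^[k] (⇑v) := funext ih
    rw [h1, hΔ, hc, Function.iterate_succ_apply']

end Ballistic

namespace Ballistic
open Complex
open scoped ENNReal NNReal ComplexConjugate InnerProductSpace
variable {d : ℕ}

lemma pow_apply_norm_le (Δop : Lp2 d →L[ℂ] Lp2 d) (k : ℕ) :
    ∀ (w : Lp2 d) (n : Zd d), ‖(Δop ^ k) w n‖ ≤ ‖Δop‖^k * ‖w‖ := by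
  induction k with
  | zero =>
    intro w n
    have h : (Δop ^ 0) w = w := by rw [pow_zero]; rfl
    rw [h, pow_zero, one_mul]
    exact lp.norm_apply_le_norm (by norm_num : (2:ℝ≥0∞) ≠ 0) w n
  | succ k ih =>
    intro w n
    have h1 : (Δop ^ (k+1)) w = (Δop ^ k) (Δop w) := by rw [pow_succ]; rfl
    rw [h1]
    calc ‖(Δop ^ k) (Δop w) n‖ ≤ ‖Δop‖^k * ‖Δop w‖ := ih (Δop w) n
      _ ≤ ‖Δop‖^k * (‖Δop‖ * ‖w‖) := by
          have := Δop.le_opNorm w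
          have h0 : (0:ℝ) ≤ ‖Δop‖^k := pow_nonneg (norm_nonneg _) k
          nlinarith
      _ = ‖Δop‖^(k+1) * ‖w‖ := by ring

lemma summable_ck (Δop : Lp2 d →L[ℂ] Lp2 d) (τ : ℂ) (w : Lp2 d) (n : Zd d) :
    Summable (fun k : ℕ => ((k.factorial : ℂ)⁻¹ * τ^k) * ((Δop ^ k) w n)) := by
  apply Summable.of_norm
  have hs : Summable (fun k : ℕ => (‖τ‖ * ‖Δop‖)^k / k.factorial * ‖w‖) :=
    (Real.summable_pow_div_factorial (‖τ‖ * ‖Δop‖)).mul_right ‖w‖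
  apply Summable.of_nonneg_of_le (fun k => norm_nonneg _) (fun k => ?_) hs
  rw [norm_mul, norm_mul, norm_inv, norm_pow]
  have h1 : ‖((k.factorial : ℂ))‖ = (k.factorial : ℝ) := by
    rw [Complex.norm_natCast]
  rw [h1]
  have h2 := pow_apply_norm_le Δop k w n
  calc (k.factorial:ℝ)⁻¹ * ‖τ‖^k * ‖(Δop ^ k) w n‖
      ≤ (k.factorial:ℝ)⁻¹ * ‖τ‖^k * (‖Δop‖^k * ‖w‖) := by
        have hnn : (0:ℝ) ≤ (k.factorial:ℝ)⁻¹ * ‖τ‖^k := by positivity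
        exact mul_le_mul_of_nonneg_left h2 hnn
    _ = (‖τ‖ * ‖Δop‖)^k / (k.factorial:ℝ) * ‖w‖ := by rw [mul_pow]; ring

lemma exp_smul_apply_pt (Δop : Lp2 d →L[ℂ] Lp2 d) (τ : ℂ) (v : Lp2 d) (n : Zd d) :
    (NormedSpace.exp (τ • Δop)) v n
      = ∑' k : ℕ, ((k.factorial : ℂ)⁻¹ * τ^k) * ((Δop ^ k) v n) := by
  rw [exp_apply_pt]
  apply tsum_congr; intro k
  rw [smul_pow]
  have h1 : ((τ^k • Δop ^ k) v) = τ^k • ((Δop ^ k) v) := rfl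
  rw [h1]
  have h2 : (τ^k • ((Δop ^ k) v) : Lp2 d) n = τ^k * ((Δop ^ k) v n) := by
    rw [lp.coeFn_smul]; rfl
  rw [h2, smul_eq_mul]
  ring

lemma key_identity (Δop : Lp2 d →L[ℂ] Lp2 d)
    (hΔ : ∀ (u : Lp2 d) (n : Zd d), Δop u n = lapFun (⇑u) n)
    (u : Lp2 d) (hu : memW 1 u) (j : Fin d) (τ : ℂ) (n : Zd d) :
    (n j : ℂ) * ((NormedSpace.exp (τ • Δop)) u n)
      = (NormedSpace.exp (τ • Δop)) (XL j u hu) n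
        + τ * ((NormedSpace.exp (τ • Δop)) (AL j u) n) := by
  set c : ℕ → ℂ := fun k => (k.factorial : ℂ)⁻¹ * τ^k with hc
  set x := XL j u hu
  set a := AL j u
  set R : ℕ → ℂ := fun k =>
    match k with
    | 0 => 0
    | (m+1) => c (m+1) * ((m:ℂ)+1) * ((Δop ^ m) a n) with hRdef
  have hterm : ∀ k : ℕ, (n j : ℂ) * (c k * ((Δop ^ k) u n))
      = c k * ((Δop ^ k) x n) + R k := by
    intro k
    match k with
    | 0 =>
      show (n j : ℂ) * (c 0 * u n) = c 0 * (x n) + 0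
      rw [show x n = (n j : ℂ) * u n from rfl]
      ring
    | (m+1) =>
      have h1 := X_lap_iter j m (⇑u) n
      have h2 : (Δop ^ (m+1)) u n = lapFun^[m+1] (⇑u) n := coe_pow Δop hΔ (m+1) u n
      have h3 : (Δop ^ (m+1)) x n = lapFun^[m+1] (Xf j ⇑u) n := coe_pow Δop hΔ (m+1) x n
      have h4 : (Δop ^ m) a n = lapFun^[m] (Af j ⇑u) n := coe_pow Δop hΔ m a n
      show (n j : ℂ) * (c (m+1) * ((Δop ^ (m+1)) u n))
        = c (m+1) * ((Δop ^ (m+1)) x n) + c (m+1) * ((m:ℂ)+1) * ((Δop ^ m) a n)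
      rw [h2, h3, h4]
      calc (n j : ℂ) * (c (m+1) * (lapFun^[m+1] (⇑u) n))
          = c (m+1) * ((n j : ℂ) * (lapFun^[m+1] (⇑u) n)) := by ring
        _ = c (m+1) * ((lapFun^[m+1] (Xf j ⇑u)) n + ((m:ℂ)+1) * (lapFun^[m] (Af j ⇑u)) n) := by
            rw [h1]
        _ = c (m+1) * (lapFun^[m+1] (Xf j ⇑u) n)
              + c (m+1) * ((m:ℂ)+1) * (lapFun^[m] (Af j ⇑u) n) := by ring
  have hcsum_u := summable_ck Δop τ u n
  have hcsum_x := summable_ck Δop τ x n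
  have hcsum_a := summable_ck Δop τ a n
  have hR1 : ∀ m : ℕ, R (m+1) = τ * (c m * ((Δop ^ m) a n)) := by
    intro m
    show c (m+1) * ((m:ℂ)+1) * ((Δop ^ m) a n) = τ * (c m * ((Δop ^ m) a n))
    have hfac : c (m+1) * ((m:ℂ)+1) = τ * c m := by
      rw [hc]
      simp only [Nat.factorial_succ, Nat.cast_mul, Nat.cast_add, Nat.cast_one, mul_inv]
      have hm1 : ((m:ℂ)+1) ≠ 0 := Nat.cast_add_one_ne_zero m
      have hmf : ((m.factorial : ℂ)) ≠ 0 := by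
        exact_mod_cast Nat.cast_ne_zero.2 m.factorial_ne_zero
      field_simp
      ring
    calc c (m+1) * ((m:ℂ)+1) * ((Δop ^ m) a n)
        = (c (m+1) * ((m:ℂ)+1)) * ((Δop ^ m) a n) := by ring
      _ = (τ * c m) * ((Δop ^ m) a n) := by rw [hfac]
      _ = τ * (c m * ((Δop ^ m) a n)) := by ring
  have hRsum : Summable R := by
    rw [← summable_nat_add_iff 1]
    have : (fun m : ℕ => R (m+1)) = fun m : ℕ => τ * (c m * ((Δop ^ m) a n)) :=
      funext hR1
    rw [this]
    exact hcsum_a.mul_left τ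
  calc (n j : ℂ) * ((NormedSpace.exp (τ • Δop)) u n)
      = (n j : ℂ) * ∑' k : ℕ, c k * ((Δop ^ k) u n) := by rw [exp_smul_apply_pt]
    _ = ∑' k : ℕ, (n j : ℂ) * (c k * ((Δop ^ k) u n)) := (tsum_mul_left).symm
    _ = ∑' k : ℕ, (c k * ((Δop ^ k) x n) + R k) := tsum_congr hterm
    _ = (∑' k : ℕ, c k * ((Δop ^ k) x n)) + ∑' k : ℕ, R k := Summable.tsum_add hcsum_x hRsum
    _ = (NormedSpace.exp (τ • Δop)) x n + τ * ((NormedSpace.exp (τ • Δop)) a n) := by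
        congr 1
        · rw [exp_smul_apply_pt]
        · rw [Summable.tsum_eq_zero_add hRsum]
          have hR0 : R 0 = 0 := rfl
          rw [hR0, zero_add]
          have : (fun m : ℕ => R (m+1)) = fun m : ℕ => τ * (c m * ((Δop ^ m) a n)) :=
            funext hR1
          rw [this, tsum_mul_left, exp_smul_apply_pt]

end Ballistic

namespace Ballistic
open Complex
open scoped ENNReal NNReal ComplexConjugate InnerProductSpace
variable {d : ℕ}

lemma norm_sq_eq_tsum (v : Lp2 d) : ‖v‖^2 = ∑' n : Zd d, ‖v n‖^2 := by
  have h := lp.norm_rpow_eq_tsum (p := 2) (by norm_num) v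
  have h2 : ∀ x : ℝ, x ^ (2:ℝ≥0∞).toReal = x ^ 2 := by
    intro x
    rw [show (2:ℝ≥0∞).toReal = ((2:ℕ):ℝ) by norm_num, Real.rpow_natCast]
  rw [h2] at h
  simp only [h2] at h
  exact h

lemma exists_A_ne (hd : 1 ≤ d) (u : Lp2 d) (hu0 : u ≠ 0) : ∃ j : Fin d, AL j u ≠ 0 := by
  by_contra hcon
  push_neg at hcon
  set j0 : Fin d := ⟨0, hd⟩
  have hA : ∀ n : Zd d, u (n - eVec d j0) = u (n + eVec d j0) := by
    intro n
    have h1 : (AL j0 u) n = (0 : Lp2 d) n := by rw [hcon j0]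
    have h2 : (0 : Lp2 d) n = 0 := rfl
    rw [AL_apply, h2, sub_eq_zero] at h1
    exact h1
  have hper : ∀ m : Zd d, u (m + eVec d j0 + eVec d j0) = u m := by
    intro m
    have := hA (m + eVec d j0)
    simpa using this.symm
  have hn0 : ∃ n₀ : Zd d, u n₀ ≠ 0 := by
    by_contra hall
    push_neg at hall
    apply hu0
    ext n
    exact hall n
  obtain ⟨n₀, hn₀⟩ := hn0
  set g : ℕ → Zd d := fun k => n₀ + (2*(k:ℤ)) • eVec d j0 with hg
  have he : eVec d j0 j0 = 1 := by simp [eVec, Pi.single_eq_same]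
  have hcoord : ∀ k : ℕ, (g k) j0 = n₀ j0 + 2*(k:ℤ) := by
    intro k
    simp only [hg, Pi.add_apply, Pi.smul_apply, he, smul_eq_mul, mul_one]
  have hginj : Function.Injective g := by
    intro k k' hkk
    have h1 : (g k) j0 = (g k') j0 := by rw [hkk]
    rw [hcoord, hcoord] at h1
    omega
  have hval : ∀ k : ℕ, u (g k) = u n₀ := by
    intro k
    induction k with
    | zero =>
      have h0 : g 0 = n₀ := by
        rw [hg]
        norm_num
      rw [h0]
    | succ k ih =>
      have hstep : g (k+1) = g k + eVec d j0 + eVec d j0 := by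
        simp only [hg]
        have h2 : (2*((k:ℤ)+1)) = 2*(k:ℤ) + 1 + 1 := by ring
        push_cast
        rw [h2, add_zsmul, add_zsmul, one_zsmul]
        abel
      rw [hstep, hper, ih]
  have hsum : Summable ((fun n : Zd d => ‖u n‖^2) ∘ g) :=
    (summable_sq u).comp_injective hginj
  have hval2 : ((fun n : Zd d => ‖u n‖^2) ∘ g) = fun _ : ℕ => ‖u n₀‖^2 := by
    funext k
    simp [Function.comp, hval k]
  rw [hval2] at hsum
  have hzero : ‖u n₀‖^2 = 0 := by rwa [summable_const_iff] at hsum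
  have h5 : ‖u n₀‖ = 0 := (pow_eq_zero_iff two_ne_zero).mp hzero
  exact hn₀ (norm_eq_zero.mp h5)

end Ballistic

set_option maxHeartbeats 2000000 in
set_option synthInstance.maxHeartbeats 1000000 in
open Complex in
open scoped ENNReal NNReal ComplexConjugate InnerProductSpace in
/-- Ballistic transport for the free discrete Laplacian: for
every nonzero `u ∈ ℋ¹(ℤ^d)` there is `c > 0` with `‖e^{itΔ}u‖₁ / t > c` for
all `t > 0`. -/
theorem free_laplacian_ballistic
    (d : ℕ) (hd : 1 ≤ d)
    (Δop : Lp2 d →L[ℂ] Lp2 d)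
    (hΔ : ∀ (u : Lp2 d) (n : Zd d), Δop u n = lapFun (⇑u) n)
    (u : Lp2 d) (hu : memW 1 u) (hu0 : u ≠ 0) :
    ∃ c : ℝ, 0 < c ∧ ∀ t : ℝ, 0 < t →
      c < wnorm 1 (NormedSpace.exp (((t : ℂ) * Complex.I) • Δop) u) / t := by
  classical
  have hsa := Ballistic.lap_sa Δop hΔ
  obtain ⟨j, hj⟩ := Ballistic.exists_A_ne hd u hu0
  set a : Lp2 d := Ballistic.AL j u with ha
  set x : Lp2 d := Ballistic.XL j u hu with hxd
  have hα : 0 < ‖a‖ := norm_pos_iff.mpr hj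
  have hKnn : (0:ℝ) ≤ ‖(⟪a, x⟫_ℂ : ℂ)‖ := norm_nonneg _
  set K : ℝ := ‖(⟪a, x⟫_ℂ : ℂ)‖ with hKd
  set α : ℝ := ‖a‖ with hαd
  set T₀ : ℝ := 4*K/α^2 + 1 with hT₀d
  have hT₀pos : 0 < T₀ := by positivity
  have hu_norm : 0 < ‖u‖ := norm_pos_iff.mpr hu0
  set m : ℝ := min (α/2) (‖u‖/T₀) with hmd
  have hmpos : 0 < m := lt_min (by positivity) (by positivity)
  refine ⟨m/2, by positivity, ?_⟩
  intro t ht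
  set τ : ℂ := (t:ℂ) * Complex.I with hτ
  set E := NormedSpace.exp (τ • Δop) with hE
  set ψ := E u with hψ
  -- the moment vectors
  set W : Fin d → Lp2 d :=
    fun j' => E (Ballistic.XL j' u hu) + τ • E (Ballistic.AL j' u) with hWd
  have hWn : ∀ (j' : Fin d) (n : Zd d), (W j') n = ((n j' : ℂ)) * ψ n := by
    intro j' n
    have hkey := Ballistic.key_identity Δop hΔ u hu j' τ n
    have hadd : (W j') n = E (Ballistic.XL j' u hu) n + τ * (E (Ballistic.AL j' u) n) := by
      rw [hWd]
      have h1 : ((E (Ballistic.XL j' u hu) + τ • E (Ballistic.AL j' u) : Lp2 d) : Zd d → ℂ)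
          = (E (Ballistic.XL j' u hu) : Zd d → ℂ) + ((τ • E (Ballistic.AL j' u) : Lp2 d) : Zd d → ℂ) :=
        lp.coeFn_add _ _
      rw [h1, Pi.add_apply, lp.coeFn_smul, Pi.smul_apply, smul_eq_mul]
    rw [hadd, ← hkey]
  have hWsq : ∀ (j' : Fin d) (n : Zd d), ‖(W j') n‖^2 = ((n j' : ℝ))^2 * ‖ψ n‖^2 := by
    intro j' n
    rw [hWn j' n, norm_mul, mul_pow]
    congr 1
    rw [show ((n j' : ℂ)) = (((n j' : ℝ)) : ℂ) by push_cast; ring, Complex.norm_real,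
      Real.norm_eq_abs]
    exact sq_abs _
  have hptwise : ∀ n : Zd d, wt n ^ (1:ℝ) * ‖ψ n‖^2 = ‖ψ n‖^2 + ∑ j', ‖(W j') n‖^2 := by
    intro n
    rw [Real.rpow_one, wt, Finset.sum_congr rfl (fun j' _ => hWsq j' n), ← Finset.sum_mul]
    ring
  have hsummW : Summable (fun n : Zd d => wt n ^ (1:ℝ) * ‖ψ n‖^2) := by
    rw [show (fun n : Zd d => wt n ^ (1:ℝ) * ‖ψ n‖^2)
      = fun n => ‖ψ n‖^2 + ∑ j', ‖(W j') n‖^2 from funext hptwise]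
    exact (Ballistic.summable_sq ψ).add
      (summable_sum (fun j' _ => Ballistic.summable_sq (W j')))
  have hwnn : (0:ℝ) ≤ ∑' n : Zd d, wt n ^ (1:ℝ) * ‖ψ n‖^2 :=
    tsum_nonneg (fun n => mul_nonneg (Real.rpow_nonneg (le_of_lt (Ballistic.wt_pos n)) 1)
      (sq_nonneg _))
  have hwsq : wnorm 1 ψ ^ 2 = ∑' n : Zd d, wt n ^ (1:ℝ) * ‖ψ n‖^2 := Real.sq_sqrt hwnn
  have hwnorm_nn : 0 ≤ wnorm 1 ψ := Real.sqrt_nonneg _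
  -- lower bound by plain norm
  have hnormψ : ‖ψ‖ = ‖u‖ := by
    have h := Ballistic.exp_norm_eq Δop hsa t u
    rw [← hτ] at h
    exact h
  have h2 : ‖u‖^2 ≤ wnorm 1 ψ^2 := by
    rw [hwsq, ← hnormψ, Ballistic.norm_sq_eq_tsum]
    apply Summable.tsum_le_tsum _ (Ballistic.summable_sq ψ) hsummW
    intro n
    have hw1 := Ballistic.one_le_wt n
    have := sq_nonneg ‖ψ n‖
    rw [Real.rpow_one]
    nlinarith
  have h2' : ‖u‖ ≤ wnorm 1 ψ := by nlinarith
  -- lower bound by the moment vector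
  have h1 : ‖W j‖^2 ≤ wnorm 1 ψ^2 := by
    rw [hwsq, Ballistic.norm_sq_eq_tsum]
    apply Summable.tsum_le_tsum _ (Ballistic.summable_sq (W j)) hsummW
    intro n
    rw [hWsq j n, Real.rpow_one]
    have h3 : ((n j : ℝ))^2 ≤ wt n := by
      have h4 : ((n j:ℝ))^2 ≤ ∑ i, ((n i:ℝ))^2 :=
        Finset.single_le_sum (f := fun i => ((n i : ℝ))^2)
          (fun i _ => sq_nonneg _) (Finset.mem_univ j)
      simp only [wt]; linarith
    nlinarith [sq_nonneg ‖ψ n‖]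
  have h1' : ‖W j‖ ≤ wnorm 1 ψ := by nlinarith [norm_nonneg (W j)]
  -- the inner product identity
  have hEi : ∀ p q : Lp2 d, ⟪E p, E q⟫_ℂ = ⟪p, q⟫_ℂ := by
    intro p q
    have h := Ballistic.exp_inner Δop hsa t p q
    rw [← hτ] at h
    exact h
  have hinner : (⟪E a, W j⟫_ℂ : ℂ) = ⟪a, x⟫_ℂ + τ * ((‖a‖:ℂ))^2 := by
    rw [hWd]
    rw [inner_add_right, inner_smul_right, hEi a (Ballistic.XL j u hu),
      hEi a (Ballistic.AL j u), ← ha, ← hxd, inner_self_eq_norm_sq_to_K]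
    norm_cast
  have hIm : (⟪E a, W j⟫_ℂ : ℂ).im = (⟪a, x⟫_ℂ : ℂ).im + t * ‖a‖^2 := by
    rw [hinner, Complex.add_im, hτ]
    congr 1
    have : ((‖a‖:ℂ))^2 = ((‖a‖^2 : ℝ) : ℂ) := by push_cast; ring
    rw [this]
    simp [Complex.mul_im, Complex.mul_re]
    exact Or.inl (by rw [← Complex.ofReal_pow]; exact Complex.ofReal_re _)
  have hIm_le : t * α^2 ≤ ‖(⟪E a, W j⟫_ℂ : ℂ)‖ + K := by
    have ha1 : (⟪E a, W j⟫_ℂ : ℂ).im ≤ ‖(⟪E a, W j⟫_ℂ : ℂ)‖ := by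
      exact Complex.im_le_norm _
    have ha2 : |(⟪a, x⟫_ℂ : ℂ).im| ≤ K := by
      rw [hKd]
      exact Complex.abs_im_le_norm _
    have ha3 := abs_le.mp ha2
    rw [hαd]
    linarith [hIm]
  have hcs : ‖(⟪E a, W j⟫_ℂ : ℂ)‖ ≤ ‖E a‖ * ‖W j‖ := norm_inner_le_norm _ _
  have hEa : ‖E a‖ = ‖a‖ := by
    have h := Ballistic.exp_norm_eq Δop hsa t a
    rw [← hτ] at h
    exact h
  have hbig : t * α^2 ≤ α * wnorm 1 ψ + K := by
    have h5 : ‖E a‖ * ‖W j‖ ≤ α * wnorm 1 ψ := by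
      rw [hEa, ← hαd]
      exact mul_le_mul_of_nonneg_left h1' (le_of_lt hα)
    linarith
  -- conclude
  rw [lt_div_iff₀ ht]
  rcases le_or_gt t T₀ with hcase | hcase
  · have hm2 : m ≤ ‖u‖/T₀ := min_le_right _ _
    have hm3 : m * T₀ ≤ ‖u‖ := (le_div_iff₀ hT₀pos).mp hm2
    nlinarith
  · have hmα : m ≤ α/2 := min_le_left _ _
    have h4K : 4*K/α^2 * α^2 = 4*K := div_mul_cancel₀ _ (ne_of_gt (by positivity))
    have h6 : 4*K + α^2 < t*α^2 := by
      have h7 : T₀ * α^2 < t * α^2 :=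
        mul_lt_mul_of_pos_right hcase (by positivity)
      rw [hT₀d, add_mul, h4K, one_mul] at h7
      linarith
    nlinarith [mul_le_mul_of_nonneg_right hmα (le_of_lt ht), mul_pos ht hα,
      mul_nonneg (le_of_lt ht) (le_of_lt hα), hwnorm_nn, sq_nonneg α]
end
end

section
/- For every m ≥ 1 there is a constant C = C(m,d) > 0 such that for all ψ ∈ ℋ^{m-1}(ℤ^d), the commutator [Q^m, Δ], given explicitly by ([Q^m,Δ]ψ)_n = Σ_{j=1}^d ((1+|n|²)^{m/2} - (1+|n+e_j|²)^{m/2})ψ_{n+e_j} + Σ_{j=1}^d ((1+|n|²)^{m/2} - (1+|n-e_j|²)^{m/2})ψ_{n-e_j}, satisfies ‖[Q^m,Δ]ψ‖₀ ≤ C ‖ψ‖_{m-1}. -/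
open MeasureTheory
noncomputable section

variable {d : ℕ}

/-- The commutator `[Q^m, Δ]` applied (pointwise) to `ψ`:
`([Q^m,Δ]ψ)_n = ∑_j ((1+|n|²)^{m/2} - (1+|n+e_j|²)^{m/2}) ψ_{n+e_j}
              + ∑_j ((1+|n|²)^{m/2} - (1+|n-e_j|²)^{m/2}) ψ_{n-e_j}`. -/
def commQmLap {d : ℕ} (m : ℕ) (ψ : Lp2 d) : Zd d → ℂ := fun n =>
  (∑ j : Fin d,
      ((wt n ^ ((m : ℝ) / 2) - wt (n + eVec d j) ^ ((m : ℝ) / 2) : ℝ) : ℂ)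
        * ψ (n + eVec d j))
    + ∑ j : Fin d,
      ((wt n ^ ((m : ℝ) / 2) - wt (n - eVec d j) ^ ((m : ℝ) / 2) : ℝ) : ℂ)
        * ψ (n - eVec d j)


/-! ### Auxiliary lemmas -/

lemma aux_wt_ge_one (n : Zd d) : 1 ≤ wt n := by
  have : 0 ≤ ∑ j, ((n j : ℝ)) ^ 2 := Finset.sum_nonneg fun j _ => sq_nonneg _
  simp only [wt]; linarith

lemma aux_sq_le (n : Zd d) (j : Fin d) : ((n j : ℝ)) ^ 2 + 1 ≤ wt n := by
  have : ((n j:ℝ))^2 ≤ ∑ k, ((n k : ℝ)) ^ 2 :=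
    Finset.single_le_sum (fun k _ => sq_nonneg ((n k : ℝ))) (Finset.mem_univ j)
  simp only [wt]; linarith

lemma aux_abs_nj_le (n : Zd d) (j : Fin d) : |(n j : ℝ)| ≤ Real.sqrt (wt n) := by
  have h1 : ((n j:ℝ))^2 ≤ wt n := by have := aux_sq_le n j; linarith
  have := Real.sqrt_le_sqrt h1
  rwa [Real.sqrt_sq_eq_abs] at this

lemma aux_one_le_sqrt_wt (n : Zd d) : 1 ≤ Real.sqrt (wt n) := by
  have := Real.sqrt_le_sqrt (aux_wt_ge_one n)
  rwa [Real.sqrt_one] at this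

lemma aux_wt_add_e (n : Zd d) (j : Fin d) :
    wt (n + eVec d j) = wt n + 2 * (n j : ℝ) + 1 := by
  simp only [wt]
  have h : ∀ k, (((n + eVec d j) k : ℤ) : ℝ) ^ 2
      = (n k : ℝ) ^ 2 + (if k = j then 2 * (n j : ℝ) + 1 else 0) := by
    intro k
    have hk : (n + eVec d j) k = n k + eVec d j k := rfl
    by_cases h : k = j <;> rw [hk] <;> simp [eVec, Pi.single_apply, h] <;> push_cast <;> ring
  rw [Finset.sum_congr rfl fun k _ => h k, Finset.sum_add_distrib,
    Finset.sum_ite_eq' Finset.univ j fun _ => 2 * (n j : ℝ) + 1]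
  simp; ring

lemma aux_wt_sub_e (n : Zd d) (j : Fin d) :
    wt (n - eVec d j) = wt n - 2 * (n j : ℝ) + 1 := by
  simp only [wt]
  have h : ∀ k, (((n - eVec d j) k : ℤ) : ℝ) ^ 2
      = (n k : ℝ) ^ 2 + (if k = j then -(2 * (n j : ℝ)) + 1 else 0) := by
    intro k
    have hk : (n - eVec d j) k = n k - eVec d j k := rfl
    by_cases h : k = j <;> rw [hk] <;> simp [eVec, Pi.single_apply, h] <;> push_cast <;> ring
  rw [Finset.sum_congr rfl fun k _ => h k, Finset.sum_add_distrib,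
    Finset.sum_ite_eq' Finset.univ j fun _ => -(2 * (n j : ℝ)) + 1]
  simp; ring

lemma aux_pow_succ_diff_le (c : ℝ) (hc : 0 ≤ c) {a b : ℝ} (ha : |a| ≤ c) (hb : |b| ≤ c) :
    ∀ k : ℕ, |a ^ (k+1) - b ^ (k+1)| ≤ (k+1) * c ^ k * |a - b| := by
  intro k
  induction k with
  | zero => simp
  | succ k ih =>
    have key : a ^ (k+2) - b ^ (k+2) = a * (a ^ (k+1) - b ^ (k+1)) + (a - b) * b ^ (k+1) := by
      ring
    have h1 : |a ^ (k+2) - b ^ (k+2)| ≤ |a| * |a ^ (k+1) - b ^ (k+1)| + |a - b| * |b| ^ (k+1) := by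
      rw [key]
      calc _ ≤ |a * (a ^ (k+1) - b ^ (k+1))| + |(a - b) * b ^ (k+1)| := abs_add_le _ _
        _ = |a| * |a ^ (k+1) - b ^ (k+1)| + |a - b| * |b| ^ (k+1) := by
            rw [abs_mul, abs_mul, abs_pow]
    have h2 : |b| ^ (k+1) ≤ c ^ (k+1) := pow_le_pow_left₀ (abs_nonneg _) hb _
    have h3 : |a| * |a ^ (k+1) - b ^ (k+1)| ≤ c * ((k+1) * c ^ k * |a - b|) :=
      mul_le_mul ha ih (abs_nonneg _) hc
    have h4 : |a - b| * |b| ^ (k+1) ≤ |a - b| * c ^ (k+1) :=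
      mul_le_mul_of_nonneg_left h2 (abs_nonneg _)
    calc |a ^ (k+2) - b ^ (k+2)| ≤ c * ((k+1) * c ^ k * |a - b|) + |a - b| * c ^ (k+1) := by
          linarith
      _ = ((k+1:ℕ)+1:ℝ) * c ^ (k + 1) * |a - b| := by push_cast; ring

lemma aux_rpow_half_diff_le (k : ℕ) {a b : ℝ} (ha : 1 ≤ a) (hb : 1 ≤ b) (hab : a ≤ 3 * b)
    (hd : |a - b| ≤ 3 * Real.sqrt a) :
    |a ^ (((k:ℝ)+1)/2) - b ^ (((k:ℝ)+1)/2)|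
      ≤ (6 * ((k:ℝ)+1) * 3 ^ k) * b ^ (((k:ℝ)+1-1)/2) := by
  have ha0 : (0:ℝ) < a := lt_of_lt_of_le one_pos ha
  have hb0 : (0:ℝ) < b := lt_of_lt_of_le one_pos hb
  set s : ℝ := ((k:ℝ)+1)/2 with hs
  set x := a ^ s with hx
  set y := b ^ s with hy
  have hx0 : 0 < x := Real.rpow_pos_of_pos ha0 _
  have hy0 : 0 < y := Real.rpow_pos_of_pos hb0 _
  have hx2 : x ^ 2 = a ^ (k+1) := by
    rw [hx, ← Real.rpow_natCast (a ^ s) 2, ← Real.rpow_mul ha0.le,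
      show s * ((2:ℕ):ℝ) = ((k+1:ℕ):ℝ) by push_cast [hs]; ring, Real.rpow_natCast]
  have hy2 : y ^ 2 = b ^ (k+1) := by
    rw [hy, ← Real.rpow_natCast (b ^ s) 2, ← Real.rpow_mul hb0.le,
      show s * ((2:ℕ):ℝ) = ((k+1:ℕ):ℝ) by push_cast [hs]; ring, Real.rpow_natCast]
  have hfact : |x - y| * (x + y) = |a ^ (k+1) - b ^ (k+1)| := by
    rw [← hx2, ← hy2]
    have h : x ^ 2 - y ^ 2 = (x - y) * (x + y) := by ring
    rw [h, abs_mul, abs_of_pos (show (0:ℝ) < x + y by linarith)]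
  have hbound : |a ^ (k+1) - b ^ (k+1)| ≤ ((k:ℝ)+1) * (3*b) ^ k * (6 * Real.sqrt b) := by
    have h1 : |a| ≤ 3 * b := by rw [abs_of_pos ha0]; exact hab
    have h2 : |b| ≤ 3 * b := by rw [abs_of_pos hb0]; linarith
    have h3 := aux_pow_succ_diff_le (3*b) (by linarith) h1 h2 k
    have h4 : |a - b| ≤ 6 * Real.sqrt b := by
      have hsa : Real.sqrt a ≤ Real.sqrt (3*b) := Real.sqrt_le_sqrt hab
      have h5 : Real.sqrt (3*b) = Real.sqrt 3 * Real.sqrt b := Real.sqrt_mul (by norm_num) b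
      have h6 : Real.sqrt 3 ≤ 2 := by
        rw [show (2:ℝ) = Real.sqrt 4 by
          rw [show (4:ℝ) = 2^2 by norm_num, Real.sqrt_sq]; norm_num]
        exact Real.sqrt_le_sqrt (by norm_num)
      have h7 : 0 ≤ Real.sqrt b := Real.sqrt_nonneg b
      nlinarith [Real.sqrt_nonneg a]
    calc |a ^ (k+1) - b ^ (k+1)| ≤ ((k:ℝ)+1) * (3*b) ^ k * |a - b| := by
          push_cast at h3 ⊢; linarith
      _ ≤ ((k:ℝ)+1) * (3*b) ^ k * (6 * Real.sqrt b) := by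
        apply mul_le_mul_of_nonneg_left h4
        positivity
  have hden : b ^ s ≤ x + y := by rw [← hy]; linarith
  have hkey : |x - y| ≤ ((k:ℝ)+1) * (3*b) ^ k * (6 * Real.sqrt b) / b ^ s := by
    rw [le_div_iff₀ (Real.rpow_pos_of_pos hb0 s)]
    calc |x - y| * b ^ s ≤ |x - y| * (x + y) :=
          mul_le_mul_of_nonneg_left hden (abs_nonneg _)
      _ = |a ^ (k+1) - b ^ (k+1)| := hfact
      _ ≤ _ := hbound
  have hrhs : ((k:ℝ)+1) * (3*b) ^ k * (6 * Real.sqrt b) / b ^ s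
      = (6 * ((k:ℝ)+1) * 3 ^ k) * b ^ (((k:ℝ)+1-1)/2) := by
    rw [mul_pow, Real.sqrt_eq_rpow,
      show (b:ℝ) ^ k = b ^ ((k:ℕ):ℝ) by rw [Real.rpow_natCast]]
    rw [div_eq_iff (Real.rpow_pos_of_pos hb0 s).ne']
    rw [show (((k:ℝ)+1-1)/2) = (k:ℝ)/2 by ring]
    rw [mul_assoc _ (b ^ ((k:ℝ)/2)) (b ^ s), ← Real.rpow_add hb0, hs]
    rw [show (k:ℝ)/2 + ((k:ℝ)+1)/2 = (k:ℝ) + 1/2 by ring, Real.rpow_add hb0]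
    ring
  calc |x - y| ≤ _ := hkey
    _ = _ := hrhs

set_option maxHeartbeats 1000000 in
lemma aux_shifted_bound (r : ℝ) (K : ℝ) (ψ : Lp2 d) (hψ : memW r ψ)
    (v : Zd d) (c : Zd d → ℝ) (hc : ∀ n, |c n| ≤ K * wt (n + v) ^ (r/2)) :
    Summable (fun n : Zd d => ‖((c n : ℂ)) * ψ (n + v)‖ ^ 2) ∧
    ∑' n : Zd d, ‖((c n : ℂ)) * ψ (n + v)‖ ^ 2
      ≤ K ^ 2 * ∑' n : Zd d, wt n ^ r * ‖ψ n‖ ^ 2 := by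
  have hwt : ∀ n : Zd d, (0:ℝ) < wt n := fun n => lt_of_lt_of_le one_pos (aux_wt_ge_one n)
  have hpt : ∀ n : Zd d, ‖(c n : ℂ) * ψ (n + v)‖ ^ 2
      ≤ K ^ 2 * (wt (n + v) ^ r * ‖ψ (n + v)‖ ^ 2) := by
    intro n
    have h1 : ‖(c n : ℂ) * ψ (n + v)‖ = |c n| * ‖ψ (n + v)‖ := by
      rw [norm_mul, Complex.norm_real, Real.norm_eq_abs]
    have h2 : |c n| ^ 2 ≤ (K * wt (n + v) ^ (r/2)) ^ 2 := by
      apply sq_le_sq' _ (hc n)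
      have := abs_nonneg (c n); linarith [hc n]
    have h3 : (wt (n + v) ^ (r/2)) ^ 2 = wt (n + v) ^ r := by
      rw [← Real.rpow_natCast (wt (n + v) ^ (r/2)) 2, ← Real.rpow_mul (hwt (n+v)).le]
      norm_num
    calc ‖(c n : ℂ) * ψ (n + v)‖ ^ 2 = |c n| ^ 2 * ‖ψ (n + v)‖ ^ 2 := by rw [h1]; ring
      _ ≤ (K * wt (n + v) ^ (r/2)) ^ 2 * ‖ψ (n + v)‖ ^ 2 := by
          apply mul_le_mul_of_nonneg_right h2 (sq_nonneg _)
      _ = K ^ 2 * (wt (n + v) ^ r * ‖ψ (n + v)‖ ^ 2) := by rw [mul_pow, h3]; ring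
  have hshift : Summable (fun n : Zd d => wt (n + v) ^ r * ‖ψ (n + v)‖ ^ 2) :=
    (Equiv.addRight v).summable_iff.mpr hψ
  have hsum : Summable (fun n : Zd d => ‖(c n : ℂ) * ψ (n + v)‖ ^ 2) :=
    Summable.of_nonneg_of_le (fun n => sq_nonneg _) hpt (hshift.mul_left (K ^ 2))
  refine ⟨hsum, ?_⟩
  calc ∑' n : Zd d, ‖(c n : ℂ) * ψ (n + v)‖ ^ 2
      ≤ ∑' n : Zd d, K ^ 2 * (wt (n + v) ^ r * ‖ψ (n + v)‖ ^ 2) :=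
        Summable.tsum_le_tsum hpt hsum (hshift.mul_left (K ^ 2))
    _ = K ^ 2 * ∑' n : Zd d, wt (n + v) ^ r * ‖ψ (n + v)‖ ^ 2 := tsum_mul_left
    _ = K ^ 2 * ∑' n : Zd d, wt n ^ r * ‖ψ n‖ ^ 2 := by
        congr 1
        exact (Equiv.addRight v).tsum_eq (fun n : Zd d => wt n ^ r * ‖ψ n‖ ^ 2)

lemma aux_memℓp (f : Zd d → ℂ) (hf : Summable (fun n => ‖f n‖ ^ 2)) :
    Memℓp f 2 := by
  apply memℓp_gen
  have h : (fun n : Zd d => ‖f n‖ ^ (2:ENNReal).toReal) = fun n => ‖f n‖ ^ 2 := by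
    funext n
    rw [show ((2:ENNReal)).toReal = (2:ℝ) by norm_num, Real.rpow_two]
  rw [h]; exact hf

lemma aux_lp_summable (f : Lp2 d) : Summable (fun n : Zd d => ‖f n‖ ^ 2) := by
  have h := (memℓp_gen_iff (p := 2) (by norm_num)).1 (lp.memℓp f)
  have he : (fun n : Zd d => ‖f n‖ ^ (2:ENNReal).toReal) = fun n => ‖f n‖ ^ 2 := by
    funext n
    rw [show ((2:ENNReal)).toReal = (2:ℝ) by norm_num, Real.rpow_two]
  rwa [he] at h

lemma aux_lp_norm (f : Lp2 d) : ‖f‖ = Real.sqrt (∑' n : Zd d, ‖f n‖ ^ 2) := by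
  rw [lp.norm_eq_tsum_rpow (by norm_num) f, Real.sqrt_eq_rpow]
  have he : (fun n : Zd d => ‖f n‖ ^ (2:ENNReal).toReal) = fun n => ‖f n‖ ^ 2 := by
    funext n
    rw [show ((2:ENNReal)).toReal = (2:ℝ) by norm_num, Real.rpow_two]
  rw [he, show (1 / (2:ENNReal).toReal) = (1/2 : ℝ) by norm_num]

set_option maxHeartbeats 2000000 in
/-- For every `m ≥ 1` there is `C = C(m,d) > 0` such that
`‖[Q^m, Δ] ψ‖₀ ≤ C ‖ψ‖_{m-1}` for all `ψ ∈ ℋ^{m-1}(ℤ^d)`. -/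
theorem commutator_Qm_laplacian_bound
    (d : ℕ) (hd : 1 ≤ d) (m : ℕ) (hm : 1 ≤ m) :
    ∃ C : ℝ, 0 < C ∧ ∀ ψ : Lp2 d, memW ((m : ℝ) - 1) ψ →
      Summable (fun n : Zd d => ‖commQmLap m ψ n‖ ^ 2) ∧
      Real.sqrt (∑' n : Zd d, ‖commQmLap m ψ n‖ ^ 2)
        ≤ C * wnorm ((m : ℝ) - 1) ψ := by
  obtain ⟨k, rfl⟩ : ∃ k, m = k + 1 := ⟨m - 1, (Nat.succ_pred_eq_of_pos hm).symm⟩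
  set K : ℝ := 6 * ((k:ℝ)+1) * 3 ^ k with hKdef
  have hK : 0 < K := by positivity
  have hd0 : (0:ℝ) < (d:ℝ) := by exact_mod_cast Nat.lt_of_lt_of_le Nat.zero_lt_one hd
  refine ⟨2 * d * K, by positivity, ?_⟩
  intro ψ hψ
  set r : ℝ := ((k+1:ℕ):ℝ) - 1 with hrdef
  -- coefficient functions
  set cp : Fin d → Zd d → ℝ := fun j n =>
    wt n ^ (((k+1:ℕ):ℝ)/2) - wt (n + eVec d j) ^ (((k+1:ℕ):ℝ)/2) with hcp
  set cm : Fin d → Zd d → ℝ := fun j n =>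
    wt n ^ (((k+1:ℕ):ℝ)/2) - wt (n - eVec d j) ^ (((k+1:ℕ):ℝ)/2) with hcm
  have hwtpos : ∀ n : Zd d, (0:ℝ) < wt n := fun n => lt_of_lt_of_le one_pos (aux_wt_ge_one n)
  have he1 : (((k+1:ℕ):ℝ))/2 = ((k:ℝ)+1)/2 := by push_cast; ring
  have he2 : r/2 = ((k:ℝ)+1-1)/2 := by rw [hrdef]; push_cast; ring
  -- pointwise coefficient bounds
  have hcoefP : ∀ (j : Fin d) (n : Zd d), |cp j n| ≤ K * wt (n + eVec d j) ^ (r/2) := by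
    intro j n
    have hsq := aux_sq_le n j
    have hab : wt n ≤ 3 * wt (n + eVec d j) := by
      rw [aux_wt_add_e]
      nlinarith [sq_nonneg ((n j : ℝ) + 3/2)]
    have hdd : |wt n - wt (n + eVec d j)| ≤ 3 * Real.sqrt (wt n) := by
      rw [aux_wt_add_e, show wt n - (wt n + 2 * (n j : ℝ) + 1) = -(2 * (n j:ℝ) + 1) by ring,
        abs_neg]
      have h1 : |2 * (n j:ℝ) + 1| ≤ 2 * |(n j:ℝ)| + 1 := by
        calc |2 * (n j:ℝ) + 1| ≤ |2 * (n j:ℝ)| + |(1:ℝ)| := abs_add_le _ _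
          _ = 2 * |(n j:ℝ)| + 1 := by rw [abs_mul]; norm_num
      have h2 := aux_abs_nj_le n j
      have h3 := aux_one_le_sqrt_wt n
      linarith
    have key := aux_rpow_half_diff_le k (aux_wt_ge_one n) (aux_wt_ge_one (n + eVec d j)) hab hdd
    rw [hcp, he1, he2, hKdef]
    exact key
  have hcoefM : ∀ (j : Fin d) (n : Zd d), |cm j n| ≤ K * wt (n - eVec d j) ^ (r/2) := by
    intro j n
    have hsq := aux_sq_le n j
    have hab : wt n ≤ 3 * wt (n - eVec d j) := by
      rw [aux_wt_sub_e]
      nlinarith [sq_nonneg ((n j : ℝ) - 3/2)]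
    have hdd : |wt n - wt (n - eVec d j)| ≤ 3 * Real.sqrt (wt n) := by
      rw [aux_wt_sub_e, show wt n - (wt n - 2 * (n j : ℝ) + 1) = 2 * (n j:ℝ) - 1 by ring]
      have h1 : |2 * (n j:ℝ) - 1| ≤ 2 * |(n j:ℝ)| + 1 := by
        calc |2 * (n j:ℝ) - 1| ≤ |2 * (n j:ℝ)| + |(1:ℝ)| := abs_sub _ _
          _ = 2 * |(n j:ℝ)| + 1 := by rw [abs_mul]; norm_num
      have h2 := aux_abs_nj_le n j
      have h3 := aux_one_le_sqrt_wt n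
      linarith
    have key := aux_rpow_half_diff_le k (aux_wt_ge_one n) (aux_wt_ge_one (n - eVec d j)) hab hdd
    rw [hcm, he1, he2, hKdef]
    exact key
  -- ℓ² bounds for each shifted piece
  have hP : ∀ j : Fin d,
      Summable (fun n : Zd d => ‖((cp j n : ℂ)) * ψ (n + eVec d j)‖ ^ 2) ∧
      ∑' n : Zd d, ‖((cp j n : ℂ)) * ψ (n + eVec d j)‖ ^ 2
        ≤ K ^ 2 * ∑' n : Zd d, wt n ^ r * ‖ψ n‖ ^ 2 :=
    fun j => aux_shifted_bound r K ψ hψ (eVec d j) (cp j) (hcoefP j)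
  have hM : ∀ j : Fin d,
      Summable (fun n : Zd d => ‖((cm j n : ℂ)) * ψ (n - eVec d j)‖ ^ 2) ∧
      ∑' n : Zd d, ‖((cm j n : ℂ)) * ψ (n - eVec d j)‖ ^ 2
        ≤ K ^ 2 * ∑' n : Zd d, wt n ^ r * ‖ψ n‖ ^ 2 := by
    intro j
    have hveq : ∀ n : Zd d, n + -(eVec d j) = n - eVec d j := fun n => (sub_eq_add_neg n _).symm
    have hc' : ∀ n : Zd d, |cm j n| ≤ K * wt (n + -(eVec d j)) ^ (r/2) := by
      intro n; rw [hveq]; exact hcoefM j n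
    have h := aux_shifted_bound r K ψ hψ (-(eVec d j)) (cm j) hc'
    have hfun : (fun n : Zd d => ‖((cm j n : ℂ)) * ψ (n + -(eVec d j))‖ ^ 2)
        = fun n : Zd d => ‖((cm j n : ℂ)) * ψ (n - eVec d j)‖ ^ 2 := by
      funext n; rw [hveq]
    rw [hfun] at h
    exact h
  -- lp elements
  set A : Fin d → Lp2 d := fun j =>
    ⟨fun n => ((cp j n : ℂ)) * ψ (n + eVec d j), aux_memℓp _ (hP j).1⟩ with hA
  set B : Fin d → Lp2 d := fun j =>
    ⟨fun n => ((cm j n : ℂ)) * ψ (n - eVec d j), aux_memℓp _ (hM j).1⟩ with hB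
  set F : Lp2 d := (∑ j, A j) + (∑ j, B j) with hF
  have hFn : ∀ n : Zd d, F n = commQmLap (k+1) ψ n := by
    intro n
    rw [hF]
    have : ((∑ j, A j) + (∑ j, B j)) n = (∑ j, A j) n + (∑ j, B j) n := rfl
    rw [this, lp.coeFn_sum, lp.coeFn_sum, Finset.sum_apply, Finset.sum_apply]
    simp only [hA, hB, commQmLap, hcp, hcm]
  have hFsum : Summable (fun n : Zd d => ‖commQmLap (k+1) ψ n‖ ^ 2) := by
    have := aux_lp_summable F
    simp only [hFn] at this
    exact this
  refine ⟨hFsum, ?_⟩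
  have hwn : 0 ≤ wnorm r ψ := Real.sqrt_nonneg _
  have hnormj : ∀ j : Fin d, ‖A j‖ ≤ K * wnorm r ψ := by
    intro j
    rw [aux_lp_norm]
    have h1 : ∑' n : Zd d, ‖(A j) n‖ ^ 2 ≤ K ^ 2 * ∑' n : Zd d, wt n ^ r * ‖ψ n‖ ^ 2 := by
      have : ∀ n : Zd d, (A j) n = ((cp j n : ℂ)) * ψ (n + eVec d j) := fun n => rfl
      simp only [this]
      exact (hP j).2
    calc Real.sqrt (∑' n : Zd d, ‖(A j) n‖ ^ 2)
        ≤ Real.sqrt (K ^ 2 * ∑' n : Zd d, wt n ^ r * ‖ψ n‖ ^ 2) := Real.sqrt_le_sqrt h1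
      _ = K * wnorm r ψ := by
          rw [Real.sqrt_mul (sq_nonneg K), Real.sqrt_sq hK.le, wnorm]
  have hnormj' : ∀ j : Fin d, ‖B j‖ ≤ K * wnorm r ψ := by
    intro j
    rw [aux_lp_norm]
    have h1 : ∑' n : Zd d, ‖(B j) n‖ ^ 2 ≤ K ^ 2 * ∑' n : Zd d, wt n ^ r * ‖ψ n‖ ^ 2 := by
      have : ∀ n : Zd d, (B j) n = ((cm j n : ℂ)) * ψ (n - eVec d j) := fun n => rfl
      simp only [this]
      exact (hM j).2
    calc Real.sqrt (∑' n : Zd d, ‖(B j) n‖ ^ 2)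
        ≤ Real.sqrt (K ^ 2 * ∑' n : Zd d, wt n ^ r * ‖ψ n‖ ^ 2) := Real.sqrt_le_sqrt h1
      _ = K * wnorm r ψ := by
          rw [Real.sqrt_mul (sq_nonneg K), Real.sqrt_sq hK.le, wnorm]
  have hFnorm : ‖F‖ ≤ 2 * d * K * wnorm r ψ := by
    calc ‖F‖ ≤ ‖∑ j, A j‖ + ‖∑ j, B j‖ := norm_add_le _ _
      _ ≤ (∑ j, ‖A j‖) + ∑ j, ‖B j‖ := add_le_add (norm_sum_le _ _) (norm_sum_le _ _)
      _ ≤ (∑ _j : Fin d, K * wnorm r ψ) + ∑ _j : Fin d, K * wnorm r ψ :=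
          add_le_add (Finset.sum_le_sum fun j _ => hnormj j)
            (Finset.sum_le_sum fun j _ => hnormj' j)
      _ = 2 * d * K * wnorm r ψ := by
          rw [Finset.sum_const, Finset.card_univ, Fintype.card_fin]
          push_cast; ring
  have hfin : Real.sqrt (∑' n : Zd d, ‖commQmLap (k+1) ψ n‖ ^ 2) = ‖F‖ := by
    rw [aux_lp_norm]
    congr 1
    exact tsum_congr fun n => by rw [hFn]
  rw [hfin]
  exact hFnorm
end
end

section
/- Let d ≥ 1 and let V : ℤ^d → ℝ satisfy V_n = o(|n|^{-1}) as |n| → ∞. Then the operator K on ℓ²(ℤ^d) defined by (Ku)_n = Σ_{i=1}^d ((2n_i+1)(V_n - V_{n+e_i})u_{n+e_i} - (2n_i-1)(V_n - V_{n-e_i})u_{n-e_i}), which equals the commutator [V,[H,-Q²]] for H = -Δ + V, is a compact operator on ℓ²(ℤ^d). -/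
open MeasureTheory
noncomputable section

variable {d : ℕ}

/-! ### Auxiliary material for Statement 17 -/

namespace Stmt17

open Filter Finset

/-- The Euclidean norm of a lattice point. -/
def Nn (n : Zd d) : ℝ := Real.sqrt (∑ j, ((n j : ℝ)) ^ 2)

lemma Nn_nonneg (n : Zd d) : 0 ≤ Nn n := Real.sqrt_nonneg _

/-- The embedding into Euclidean space. -/
def toE (n : Zd d) : EuclideanSpace ℝ (Fin d) := WithLp.toLp 2 (fun j => (n j : ℝ))

lemma norm_toE (n : Zd d) : ‖toE n‖ = Nn n := by
  rw [EuclideanSpace.norm_eq, Nn]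
  congr 1
  refine Finset.sum_congr rfl fun j _ => ?_
  rw [Real.norm_eq_abs, sq_abs]; rfl

lemma toE_add (n m : Zd d) : toE (n + m) = toE n + toE m := by
  ext j
  show (((n + m) j : ℤ) : ℝ) = (n j : ℝ) + (m j : ℝ)
  push_cast [Pi.add_apply]
  ring

lemma Nn_add_le (n m : Zd d) : Nn (n + m) ≤ Nn n + Nn m := by
  rw [← norm_toE, ← norm_toE, ← norm_toE, toE_add]
  exact norm_add_le _ _

lemma Nn_le_shift (n w : Zd d) : Nn n ≤ Nn (n + w) + Nn w := by
  have h := Nn_add_le (n + w) (-w)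
  have h2 : Nn (-w) = Nn w := by
    unfold Nn; congr 1; refine Finset.sum_congr rfl fun j _ => ?_
    push_cast [Pi.neg_apply]; ring
  simpa [h2] using h

lemma Nn_eVec (i : Fin d) : Nn (eVec d i) = 1 := by
  have : ∑ j, ((eVec d i j : ℝ)) ^ 2 = 1 := by
    have : ∀ j, ((eVec d i j : ℝ)) ^ 2 = if j = i then 1 else 0 := by
      intro j
      by_cases h : j = i
      · subst h; simp [eVec]
      · simp [eVec, Pi.single_apply, h]
    rw [Finset.sum_congr rfl fun j _ => this j]
    simp
  rw [Nn, this, Real.sqrt_one]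

lemma abs_coord_le (n : Zd d) (i : Fin d) : |(n i : ℝ)| ≤ Nn n := by
  rw [← Real.sqrt_sq_eq_abs]
  apply Real.sqrt_le_sqrt
  exact Finset.single_le_sum (f := fun j => ((n j : ℝ)) ^ 2)
    (fun j _ => sq_nonneg _) (Finset.mem_univ i)

lemma one_le_Nn {n : Zd d} (hn : n ≠ 0) : 1 ≤ Nn n := by
  obtain ⟨j, hj⟩ : ∃ j, n j ≠ 0 := by
    by_contra h
    push_neg at h
    exact hn (funext h)
  have h1 : (1 : ℝ) ≤ ((n j : ℝ)) ^ 2 := by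
    have h0 : (1 : ℤ) ≤ |n j| := Int.one_le_abs hj
    have h0' : (1 : ℝ) ≤ |((n j : ℝ))| := by
      have : ((1 : ℤ) : ℝ) ≤ ((|n j| : ℤ) : ℝ) := by exact_mod_cast h0
      simpa [Int.cast_abs] using this
    nlinarith [sq_abs ((n j : ℝ)), mul_le_mul h0' h0' (by norm_num) (abs_nonneg ((n j : ℝ)))]
  have : (1 : ℝ) ≤ ∑ k, ((n k : ℝ)) ^ 2 :=
    h1.trans (Finset.single_le_sum (f := fun k => ((n k : ℝ)) ^ 2)
      (fun k _ => sq_nonneg _) (Finset.mem_univ j))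
  calc (1 : ℝ) = Real.sqrt 1 := Real.sqrt_one.symm
    _ ≤ _ := Real.sqrt_le_sqrt this

/-- From the decay hypothesis, `(2|n|+3)|V n| → 0` cofinitely. -/
lemma g_tendsto {V : Zd d → ℝ} (hV : DecayV V) :
    Tendsto (fun n : Zd d => (2 * Nn n + 3) * |V n|) cofinite (nhds 0) := by
  have hA : Tendsto (fun n : Zd d => Nn n * |V n|) cofinite (nhds 0) := by
    have := hV.abs
    simp only [abs_zero] at this
    refine this.congr fun n => ?_
    rw [abs_mul, abs_of_nonneg (Real.sqrt_nonneg _)]; rfl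
  have hB : Tendsto (fun n : Zd d => |V n|) cofinite (nhds 0) := by
    apply squeeze_zero' (Filter.Eventually.of_forall fun n => abs_nonneg _) _ hA
    have hfin : ({(0 : Zd d)} : Set (Zd d)).Finite := Set.finite_singleton _
    have : ∀ᶠ n : Zd d in cofinite, n ∉ ({(0 : Zd d)} : Set (Zd d)) :=
      hfin.eventually_cofinite_notMem
    filter_upwards [this] with n hn
    have h1 : 1 ≤ Nn n := one_le_Nn (by simpa using hn)
    nlinarith [abs_nonneg (V n)]
  have h := (hA.const_mul (2 : ℝ)).add (hB.const_mul (3 : ℝ))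
  simp only [mul_zero, add_zero] at h
  refine h.congr fun n => ?_
  ring

/-- The key coefficient decay. -/
lemma coeff_tendsto {V : Zd d → ℝ} (hV : DecayV V) (i : Fin d) (s : ℝ) (hs : |s| ≤ 1)
    (w : Zd d) (hw : Nn w = 1) :
    Tendsto (fun n : Zd d => (2 * (n i : ℝ) + s) * (V n - V (n + w))) cofinite (nhds 0) := by
  rw [tendsto_zero_iff_abs_tendsto_zero]
  have hgw : Tendsto (fun n : Zd d => (2 * Nn (n + w) + 3) * |V (n + w)|) cofinite (nhds 0) :=
    (g_tendsto hV).comp ((add_left_injective w).tendsto_cofinite)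
  have hbound := (g_tendsto hV).add hgw
  simp only [add_zero] at hbound
  apply squeeze_zero (fun n => abs_nonneg _) _ hbound
  intro n
  have h1 : |2 * (n i : ℝ) + s| ≤ 2 * Nn n + 1 := by
    calc |2 * (n i : ℝ) + s| ≤ |2 * (n i : ℝ)| + |s| := abs_add_le _ _
      _ ≤ 2 * Nn n + 1 := by
          rw [abs_mul, abs_two]
          have := abs_coord_le n i
          linarith
  have h2 : |V n - V (n + w)| ≤ |V n| + |V (n + w)| := abs_sub _ _
  have h3 : Nn n ≤ Nn (n + w) + 1 := by
    have := Nn_le_shift n w; rw [hw] at this; exact this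
  rw [abs_mul]
  have hmul : |2 * (n i : ℝ) + s| * |V n - V (n + w)|
      ≤ (2 * Nn n + 1) * (|V n| + |V (n + w)|) := by
    apply mul_le_mul h1 h2 (abs_nonneg _)
    have := Nn_nonneg n; linarith
  refine hmul.trans ?_
  have hVn := abs_nonneg (V n)
  have hVnw := abs_nonneg (V (n + w))
  have hN := Nn_nonneg n
  have hNw := Nn_nonneg (n + w)
  nlinarith [mul_le_mul_of_nonneg_right h3 hVnw]

/-- Evaluation at a point is a continuous linear functional on `ℓ²`. -/
def evalCLM (d : ℕ) (m : Zd d) : Lp2 d →L[ℂ] ℂ :=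
  LinearMap.mkContinuous
    { toFun := fun u => u m
      map_add' := fun u v => by
        have := congrFun (lp.coeFn_add u v) m; simpa using this
      map_smul' := fun c u => by
        have := congrFun (lp.coeFn_smul c u) m; simpa using this }
    1 (fun u => by
      show ‖u m‖ ≤ 1 * ‖u‖; simpa using lp.norm_apply_le_norm (by norm_num : (2 : ENNReal) ≠ 0) u m)

@[simp] lemma evalCLM_apply (m : Zd d) (u : Lp2 d) : evalCLM d m u = u m := rfl

/-- A rank-one operator is compact. -/
lemma isCompactOperator_smulRight (φ : Lp2 d →L[ℂ] ℂ) (v : Lp2 d) :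
    IsCompactOperator ⇑(φ.smulRight v) := by
  refine ⟨(fun c : ℂ => c • v) '' Metric.closedBall 0 1, ?_, ?_⟩
  · exact (isCompact_closedBall (0 : ℂ) 1).image (continuous_id.smul continuous_const)
  · have hpre : φ ⁻¹' Metric.closedBall 0 1 ∈ nhds (0 : Lp2 d) := by
      apply φ.continuous.continuousAt.preimage_mem_nhds
      rw [map_zero]
      exact Metric.closedBall_mem_nhds _ one_pos
    refine Filter.mem_of_superset hpre fun u hu => ?_
    exact ⟨φ u, hu, rfl⟩

lemma isCompactOperator_finset_sum {ι : Type*} (F : Finset ι)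
    (A : ι → (Lp2 d →L[ℂ] Lp2 d)) (h : ∀ m ∈ F, IsCompactOperator ⇑(A m)) :
    IsCompactOperator ⇑(∑ m ∈ F, A m) := by
  classical
  induction F using Finset.induction_on with
  | empty => simpa using (isCompactOperator_zero (M₁ := Lp2 d) (M₂ := Lp2 d))
  | @insert a F' hm ih =>
      rw [Finset.sum_insert hm]
      have hcoe : ⇑(A a + ∑ m ∈ F', A m) = ⇑(A a) + ⇑(∑ m ∈ F', A m) := rfl
      rw [hcoe]
      exact (h a (Finset.mem_insert_self a F')).add
        (ih fun m hm' => h m (Finset.mem_insert_of_mem hm'))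

lemma sum_sq_le_norm_sq (u : Lp2 d) (s : Finset (Zd d)) :
    ∑ n ∈ s, ‖u n‖ ^ 2 ≤ ‖u‖ ^ 2 := by
  have h := lp.sum_rpow_le_norm_rpow (p := 2)
    (by norm_num : 0 < (2 : ENNReal).toReal) u s
  have ht : (2 : ENNReal).toReal = (2 : ℝ) := by norm_num
  rw [ht] at h
  calc ∑ n ∈ s, ‖u n‖ ^ 2 = ∑ n ∈ s, ‖u n‖ ^ (2 : ℝ) := by
        refine Finset.sum_congr rfl fun n _ => ?_
        rw [show (2:ℝ) = ((2:ℕ):ℝ) by norm_num, Real.rpow_natCast]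
    _ ≤ ‖u‖ ^ (2 : ℝ) := h
    _ = ‖u‖ ^ 2 := by rw [show (2:ℝ) = ((2:ℕ):ℝ) by norm_num, Real.rpow_natCast]

lemma shift_sum_sq_le (u : Lp2 d) (s : Finset (Zd d)) (w : Zd d) :
    ∑ n ∈ s, ‖u (n + w)‖ ^ 2 ≤ ‖u‖ ^ 2 := by
  have hinj : ∀ x ∈ s, ∀ y ∈ s, x + w = y + w → x = y := fun x _ y _ h =>
    add_left_injective w h
  exact le_trans
    (le_of_eq (Finset.sum_image (g := fun n => n + w) (f := fun m => ‖u m‖ ^ 2) hinj).symm)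
    (sum_sq_le_norm_sq u _)

set_option maxHeartbeats 1000000 in
lemma pointwise_bound (V : Zd d → ℝ) {δ : ℝ} (hδ : 0 ≤ δ)
    (K : Lp2 d →L[ℂ] Lp2 d)
    (hK : ∀ (u : Lp2 d) (n : Zd d), K u n =
      ∑ i : Fin d,
        ((2 * ((n i : ℤ) : ℂ) + 1) * ((V n : ℂ) - (V (n + eVec d i) : ℂ))
            * u (n + eVec d i)
          - (2 * ((n i : ℤ) : ℂ) - 1) * ((V n : ℂ) - (V (n - eVec d i) : ℂ))
            * u (n - eVec d i)))
    (u : Lp2 d) (n : Zd d)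
    (hco : ∀ i : Fin d,
        |(2 * (n i : ℝ) + 1) * (V n - V (n + eVec d i))| ≤ δ ∧
        |(2 * (n i : ℝ) - 1) * (V n - V (n - eVec d i))| ≤ δ) :
    ‖K u n‖ ^ 2 ≤ (2 * d * δ ^ 2) * ∑ i : Fin d,
        (‖u (n + eVec d i)‖ ^ 2 + ‖u (n - eVec d i)‖ ^ 2) := by
  set a : Fin d → ℝ := fun i => ‖u (n + eVec d i)‖ with ha
  set b : Fin d → ℝ := fun i => ‖u (n - eVec d i)‖ with hb
  have hKn : ‖K u n‖ ≤ δ * ∑ i : Fin d, (a i + b i) := by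
    rw [hK u n]
    refine (norm_sum_le _ _).trans ?_
    rw [Finset.mul_sum]
    refine Finset.sum_le_sum fun i _ => ?_
    have hterm : ‖(2 * ((n i : ℤ) : ℂ) + 1) * ((V n : ℂ) - (V (n + eVec d i) : ℂ))
          * u (n + eVec d i)
        - (2 * ((n i : ℤ) : ℂ) - 1) * ((V n : ℂ) - (V (n - eVec d i) : ℂ))
          * u (n - eVec d i)‖
        ≤ ‖(2 * ((n i : ℤ) : ℂ) + 1) * ((V n : ℂ) - (V (n + eVec d i) : ℂ))‖ * a i
        + ‖(2 * ((n i : ℤ) : ℂ) - 1) * ((V n : ℂ) - (V (n - eVec d i) : ℂ))‖ * b i := by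
      refine (norm_sub_le _ _).trans ?_
      rw [norm_mul ((2 * ((n i : ℤ) : ℂ) + 1) * ((V n : ℂ) - (V (n + eVec d i) : ℂ)))
          (u (n + eVec d i)),
        norm_mul ((2 * ((n i : ℤ) : ℂ) - 1) * ((V n : ℂ) - (V (n - eVec d i) : ℂ)))
          (u (n - eVec d i))]
    have hc1 : ‖(2 * ((n i : ℤ) : ℂ) + 1) * ((V n : ℂ) - (V (n + eVec d i) : ℂ))‖
        = |(2 * (n i : ℝ) + 1) * (V n - V (n + eVec d i))| := by
      have : (2 * ((n i : ℤ) : ℂ) + 1) * ((V n : ℂ) - (V (n + eVec d i) : ℂ))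
          = (((2 * (n i : ℝ) + 1) * (V n - V (n + eVec d i)) : ℝ) : ℂ) := by
        push_cast; ring
      rw [this, Complex.norm_real, Real.norm_eq_abs]
    have hc2 : ‖(2 * ((n i : ℤ) : ℂ) - 1) * ((V n : ℂ) - (V (n - eVec d i) : ℂ))‖
        = |(2 * (n i : ℝ) - 1) * (V n - V (n - eVec d i))| := by
      have : (2 * ((n i : ℤ) : ℂ) - 1) * ((V n : ℂ) - (V (n - eVec d i) : ℂ))
          = (((2 * (n i : ℝ) - 1) * (V n - V (n - eVec d i)) : ℝ) : ℂ) := by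
        push_cast; ring
      rw [this, Complex.norm_real, Real.norm_eq_abs]
    refine hterm.trans ?_
    rw [hc1, hc2]
    have h1 := (hco i).1
    have h2 := (hco i).2
    have hai : 0 ≤ a i := norm_nonneg _
    have hbi : 0 ≤ b i := norm_nonneg _
    nlinarith [mul_le_mul_of_nonneg_right h1 hai, mul_le_mul_of_nonneg_right h2 hbi]
  have hsq : ‖K u n‖ ^ 2 ≤ δ ^ 2 * (∑ i : Fin d, (a i + b i)) ^ 2 := by
    have hnn : 0 ≤ ∑ i : Fin d, (a i + b i) :=
      Finset.sum_nonneg fun i _ => add_nonneg (norm_nonneg _) (norm_nonneg _)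
    nlinarith [norm_nonneg (K u n), hKn]
  have hCS : (∑ i : Fin d, (a i + b i)) ^ 2 ≤ d * ∑ i : Fin d, (a i + b i) ^ 2 := by
    have := sq_sum_le_card_mul_sum_sq (s := (Finset.univ : Finset (Fin d)))
      (f := fun i => a i + b i)
    simpa [Finset.card_univ] using this
  have hab : ∀ i : Fin d, (a i + b i) ^ 2 ≤ 2 * (a i ^ 2 + b i ^ 2) := by
    intro i; nlinarith [sq_nonneg (a i - b i)]
  calc ‖K u n‖ ^ 2 ≤ δ ^ 2 * (∑ i : Fin d, (a i + b i)) ^ 2 := hsq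
    _ ≤ δ ^ 2 * (d * ∑ i : Fin d, (a i + b i) ^ 2) := by
        apply mul_le_mul_of_nonneg_left hCS (sq_nonneg δ)
    _ ≤ δ ^ 2 * (d * ∑ i : Fin d, 2 * (a i ^ 2 + b i ^ 2)) := by
        apply mul_le_mul_of_nonneg_left _ (sq_nonneg δ)
        apply mul_le_mul_of_nonneg_left _ (by positivity : (0:ℝ) ≤ (d:ℝ))
        exact Finset.sum_le_sum fun i _ => hab i
    _ = (2 * d * δ ^ 2) * ∑ i : Fin d, (a i ^ 2 + b i ^ 2) := by
        rw [← Finset.mul_sum]; ring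

set_option maxHeartbeats 1000000 in
lemma approx_norm_bound (V : Zd d → ℝ) {δ : ℝ} (hδ : 0 ≤ δ)
    (K T : Lp2 d →L[ℂ] Lp2 d) (F : Finset (Zd d))
    (hK : ∀ (u : Lp2 d) (n : Zd d), K u n =
      ∑ i : Fin d,
        ((2 * ((n i : ℤ) : ℂ) + 1) * ((V n : ℂ) - (V (n + eVec d i) : ℂ))
            * u (n + eVec d i)
          - (2 * ((n i : ℤ) : ℂ) - 1) * ((V n : ℂ) - (V (n - eVec d i) : ℂ))
            * u (n - eVec d i)))
    (hF : ∀ n : Zd d, n ∉ F → ∀ i : Fin d,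
        |(2 * (n i : ℝ) + 1) * (V n - V (n + eVec d i))| ≤ δ ∧
        |(2 * (n i : ℝ) - 1) * (V n - V (n - eVec d i))| ≤ δ)
    (hTapp : ∀ (u : Lp2 d) (n : Zd d), T u n = if n ∈ F then K u n else 0) :
    ‖K - T‖ ≤ 2 * d * δ := by
  have hd0 : (0:ℝ) ≤ 2 * d * δ :=
    mul_nonneg (mul_nonneg (by norm_num) (Nat.cast_nonneg d)) hδ
  apply ContinuousLinearMap.opNorm_le_bound _ hd0
  intro u
  have hC : 0 ≤ 2 * d * δ * ‖u‖ := mul_nonneg hd0 (norm_nonneg u)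
  apply lp.norm_le_of_forall_sum_le (by norm_num : 0 < (2 : ENNReal).toReal) hC
  intro s
  have ht2 : (2 : ENNReal).toReal = (2 : ℝ) := by norm_num
  rw [ht2]
  have hpow : ∀ x : ℝ, x ^ (2:ℝ) = x ^ 2 := fun x => by
    rw [show (2:ℝ) = ((2:ℕ):ℝ) by norm_num, Real.rpow_natCast]
  calc ∑ n ∈ s, ‖((K - T) u) n‖ ^ (2:ℝ)
      = ∑ n ∈ s, ‖((K - T) u) n‖ ^ 2 := by
        exact Finset.sum_congr rfl fun n _ => hpow _
    _ ≤ ∑ n ∈ s, (2 * d * δ ^ 2) * ∑ i : Fin d,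
          (‖u (n + eVec d i)‖ ^ 2 + ‖u (n - eVec d i)‖ ^ 2) := by
        refine Finset.sum_le_sum fun n _ => ?_
        have hval : ((K - T) u) n = if n ∈ F then 0 else K u n := by
          have hsub : (K - T) u = K u - T u := by
            rw [ContinuousLinearMap.sub_apply]
          rw [hsub, lp.coeFn_sub, Pi.sub_apply, hTapp u n]
          by_cases h : n ∈ F <;> simp [h]
        by_cases h : n ∈ F
        · rw [hval, if_pos h]
          have h0 : ‖(0:ℂ)‖ ^ 2 = (0:ℝ) := by simp
          rw [h0]
          exact mul_nonneg
            (mul_nonneg (mul_nonneg (by norm_num) (Nat.cast_nonneg d)) (sq_nonneg δ))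
            (Finset.sum_nonneg fun i _ => add_nonneg (sq_nonneg _) (sq_nonneg _))
        · rw [hval, if_neg h]
          exact pointwise_bound V hδ K hK u n (hF n h)
    _ = (2 * d * δ ^ 2) * ∑ i : Fin d, ∑ n ∈ s,
          (‖u (n + eVec d i)‖ ^ 2 + ‖u (n - eVec d i)‖ ^ 2) := by
        rw [← Finset.mul_sum, Finset.sum_comm]
    _ ≤ (2 * d * δ ^ 2) * ∑ i : Fin d, (‖u‖ ^ 2 + ‖u‖ ^ 2) := by
        apply mul_le_mul_of_nonneg_left _
          (mul_nonneg (mul_nonneg (by norm_num) (Nat.cast_nonneg d)) (sq_nonneg δ))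
        refine Finset.sum_le_sum fun i _ => ?_
        rw [Finset.sum_add_distrib]
        have ha := Stmt17.shift_sum_sq_le u s (eVec d i)
        have hb := Stmt17.shift_sum_sq_le u s (-(eVec d i))
        have hb' : ∑ n ∈ s, ‖u (n - eVec d i)‖ ^ 2 ≤ ‖u‖ ^ 2 := by
          calc ∑ n ∈ s, ‖u (n - eVec d i)‖ ^ 2
              = ∑ n ∈ s, ‖u (n + -(eVec d i))‖ ^ 2 := by
                refine Finset.sum_congr rfl fun n _ => ?_
                rw [sub_eq_add_neg]
            _ ≤ ‖u‖ ^ 2 := hb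
        exact add_le_add ha hb'
    _ = (2 * d * δ * ‖u‖) ^ 2 := by
        rw [Finset.sum_const, Finset.card_univ, Fintype.card_fin]
        push_cast; ring
    _ = (2 * d * δ * ‖u‖) ^ (2:ℝ) := (hpow _).symm



end Stmt17

set_option maxHeartbeats 1000000 in
/-- If `V = o(|n|⁻¹)`, then the operator
`(Ku)_n = ∑_i ((2n_i+1)(V_n - V_{n+e_i})u_{n+e_i} - (2n_i-1)(V_n - V_{n-e_i})u_{n-e_i})`,
which equals the commutator `[V, [H, -Q²]]` for `H = -Δ + V`, is a compact
operator on `ℓ²(ℤ^d)`. -/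
theorem commutator_V_compact
    (d : ℕ) (hd : 1 ≤ d) (V : Zd d → ℝ) (hV : DecayV V)
    (K : Lp2 d →L[ℂ] Lp2 d)
    (hK : ∀ (u : Lp2 d) (n : Zd d), K u n =
      ∑ i : Fin d,
        ((2 * ((n i : ℤ) : ℂ) + 1) * ((V n : ℂ) - (V (n + eVec d i) : ℂ))
            * u (n + eVec d i)
          - (2 * ((n i : ℤ) : ℂ) - 1) * ((V n : ℂ) - (V (n - eVec d i) : ℂ))
            * u (n - eVec d i))) :
    IsCompactOperator ⇑K := by
  classical
  open Stmt17 Filter in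
  -- Main approximation claim
  have key : ∀ ε : ℝ, 0 < ε → ∃ T : Lp2 d →L[ℂ] Lp2 d,
      IsCompactOperator ⇑T ∧ ‖K - T‖ ≤ ε := by
    intro ε hε
    set δ : ℝ := ε / (2 * d + 1) with hδdef
    have hd0 : (0:ℝ) < 2 * d + 1 := by positivity
    have hδ : 0 < δ := div_pos hε hd0
    -- the coefficient functions are eventually small
    have hev : ∀ᶠ n : Zd d in cofinite, ∀ i : Fin d,
        |(2 * (n i : ℝ) + 1) * (V n - V (n + eVec d i))| ≤ δ ∧
        |(2 * (n i : ℝ) - 1) * (V n - V (n - eVec d i))| ≤ δ := by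
      rw [eventually_all]
      intro i
      have h1 := coeff_tendsto hV i 1 (by norm_num) (eVec d i) (Nn_eVec i)
      have h2 := coeff_tendsto hV i (-1) (by norm_num) (-(eVec d i)) (by
        have h0 := Nn_eVec (d := d) i
        have hneg : Nn (-(eVec d i)) = Nn (eVec d i) := by
          unfold Stmt17.Nn; congr 1
          refine Finset.sum_congr rfl fun j _ => ?_
          push_cast [Pi.neg_apply]; ring
        rw [hneg]; exact h0)
      have h1' : ∀ᶠ n : Zd d in cofinite,
          |(2 * (n i : ℝ) + 1) * (V n - V (n + eVec d i))| ≤ δ := by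
        have habs := h1.abs
        simp only [abs_zero] at habs
        filter_upwards [habs.eventually_lt_const hδ] with n hn using hn.le
      have h2' : ∀ᶠ n : Zd d in cofinite,
          |(2 * (n i : ℝ) - 1) * (V n - V (n - eVec d i))| ≤ δ := by
        have habs := h2.abs
        simp only [abs_zero] at habs
        filter_upwards [habs.eventually_lt_const hδ] with n hn
        have he : n + -(eVec d i) = n - eVec d i := by rw [sub_eq_add_neg]
        rw [he] at hn
        calc |(2 * (n i : ℝ) - 1) * (V n - V (n - eVec d i))|
            = |(2 * (n i : ℝ) + (-1)) * (V n - V (n - eVec d i))| := by ring_nf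
          _ ≤ δ := hn.le
      filter_upwards [h1', h2'] with n hn1 hn2 using ⟨hn1, hn2⟩
    rw [Filter.eventually_cofinite] at hev
    obtain ⟨F, hF⟩ : ∃ F : Finset (Zd d), ∀ n : Zd d, n ∉ F → ∀ i : Fin d,
        |(2 * (n i : ℝ) + 1) * (V n - V (n + eVec d i))| ≤ δ ∧
        |(2 * (n i : ℝ) - 1) * (V n - V (n - eVec d i))| ≤ δ := by
      refine ⟨hev.toFinset, fun n hn => ?_⟩
      by_contra h
      exact hn (hev.mem_toFinset.mpr h)
    -- the finite-rank approximant
    obtain ⟨T, hTc, hTapp⟩ : ∃ T : Lp2 d →L[ℂ] Lp2 d, IsCompactOperator ⇑T ∧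
        ∀ (u : Lp2 d) (n : Zd d), T u n = if n ∈ F then K u n else 0 := by
      refine ⟨∑ m ∈ F, ((Stmt17.evalCLM d m).comp K).smulRight (lp.single 2 m (1 : ℂ)),
        Stmt17.isCompactOperator_finset_sum F _ fun m _ =>
          Stmt17.isCompactOperator_smulRight _ _, ?_⟩
      intro u n
      rw [ContinuousLinearMap.sum_apply, lp.coeFn_sum, Finset.sum_apply]
      have hterm : ∀ m ∈ F, (⇑((((Stmt17.evalCLM d m).comp K).smulRight
          ((lp.single 2 m (1 : ℂ)) : Lp2 d)) u)) n = if n = m then K u m else 0 := by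
        intro m _
        rw [ContinuousLinearMap.smulRight_apply, lp.coeFn_smul, Pi.smul_apply]
        rw [lp.single_apply]
        by_cases h : n = m
        · subst h; simp
        · simp [h]
      rw [Finset.sum_congr rfl hterm, Finset.sum_ite_eq F n (fun m => K u m)]
    refine ⟨T, hTc, ?_⟩
    have hnorm : ‖K - T‖ ≤ 2 * d * δ :=
      Stmt17.approx_norm_bound V hδ.le K T F hK hF hTapp
    refine hnorm.trans ?_
    rw [hδdef, ← mul_div_assoc, div_le_iff₀ hd0]
    nlinarith [hε.le, (by positivity : (0:ℝ) ≤ (d:ℝ))]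
  -- conclude by closedness of compact operators
  have happrox : ∀ k : ℕ, ∃ T : Lp2 d →L[ℂ] Lp2 d,
      IsCompactOperator ⇑T ∧ ‖K - T‖ ≤ 1 / (k + 1) := fun k =>
    key (1 / (k + 1)) (by positivity)
  choose T hTc hTn using happrox
  have htend : Filter.Tendsto T Filter.atTop (nhds K) := by
    rw [tendsto_iff_norm_sub_tendsto_zero]
    apply squeeze_zero (fun k => norm_nonneg _) _ tendsto_one_div_add_atTop_nhds_zero_nat
    intro k
    rw [norm_sub_rev]
    exact hTn k
  exact isCompactOperator_of_tendsto htend (Filter.Eventually.of_forall hTc)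
end
end

section
/- Let H be a self-adjoint operator on ℓ²(ℤ^d). Suppose there exists r > 0 such that for every nonzero u ∈ ℋ^r_ac(ℤ^d) there is a constant b_{r,u} > 0 with ‖e^{-itH}u‖_r ≥ b_{r,u} t^r for all t ≥ 1. Then for every r' > r and every nonzero u ∈ ℋ^{r'}_ac(ℤ^d) there exists a constant b_{r',u} > 0 such that ‖e^{-itH}u‖_{r'} ≥ b_{r',u} t^{r'} for all t ≥ 1; moreover, for ℓ²-normalized u one may take b_{r',u} = b_{r,u}^{r'/r}. -/
open MeasureTheory
noncomputable section

variable {d : ℕ}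

open scoped ENNReal

/-- The weighted norm `‖u‖_r` with values in `ℝ≥0∞` (so that the inequalities
below remain meaningful when `e^{-itH}u ∉ ℋʳ`, in which case the norm is `∞`). -/
def enorm' (d : ℕ) (r : ℝ) (u : Lp2 d) : ℝ≥0∞ :=
  (∑' n : Zd d, ENNReal.ofReal (wt n ^ r * ‖u n‖ ^ 2)) ^ ((2 : ℝ)⁻¹)


set_option synthInstance.maxHeartbeats 1000000
set_option maxHeartbeats 1000000

lemma one_le_wt {d : ℕ} (n : Zd d) : 1 ≤ wt n := by
  have : 0 ≤ ∑ j, ((n j : ℝ)) ^ 2 := Finset.sum_nonneg fun j _ => sq_nonneg _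
  simp [wt]; linarith

lemma wt_pos {d : ℕ} (n : Zd d) : 0 < wt n := lt_of_lt_of_le one_pos (one_le_wt n)

lemma memW_mono {d : ℕ} {r r' : ℝ} (hrr' : r ≤ r') {u : Lp2 d} (h : memW r' u) :
    memW r u := by
  refine h.of_nonneg_of_le
    (fun n => mul_nonneg (Real.rpow_nonneg (wt_pos n).le r) (sq_nonneg _)) (fun n => ?_)
  apply mul_le_mul_of_nonneg_right _ (by positivity)
  exact Real.rpow_le_rpow_of_exponent_le (one_le_wt n) hrr'

lemma evol_norm {d : ℕ} {H : Lp2 d →L[ℂ] Lp2 d} (hH : IsSelfAdjoint H) (t : ℝ) (u : Lp2 d) :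
    ‖evol H t u‖ = ‖u‖ := by
  set A : Lp2 d →L[ℂ] Lp2 d := (-(t : ℂ) * Complex.I) • H with hA
  have hstar : star A = -A := by
    rw [hA, star_smul, hH.star_eq, ← neg_smul]
    congr 1
    simp [Complex.ext_iff]
  have hcomm : Commute (-A) A := (Commute.refl A).neg_left
  have hu : star (NormedSpace.exp A) * NormedSpace.exp A = 1 := by
    let +nondep : NormedAlgebra ℚ (Lp2 d →L[ℂ] Lp2 d) := .restrictScalars ℚ ℂ _
    rw [NormedSpace.star_exp, hstar, ← NormedSpace.exp_add_of_commute hcomm, neg_add_cancel,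
      NormedSpace.exp_zero]
  set B := NormedSpace.exp A with hB
  have hinner : (inner ℂ (B u) (B u) : ℂ) = inner ℂ u u := by
    have h1 : ContinuousLinearMap.adjoint B (B u) = u := by
      have : (ContinuousLinearMap.adjoint B).comp B = 1 := by
        rw [← ContinuousLinearMap.star_eq_adjoint]; exact hu
      calc ContinuousLinearMap.adjoint B (B u)
          = ((ContinuousLinearMap.adjoint B).comp B) u := rfl
        _ = u := by rw [this]; rfl
    calc (inner ℂ (B u) (B u) : ℂ) = inner ℂ u (ContinuousLinearMap.adjoint B (B u)) :=
          (ContinuousLinearMap.adjoint_inner_right B u (B u)).symm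
      _ = inner ℂ u u := by rw [h1]
  have h2 : ‖B u‖ ^ 2 = ‖u‖ ^ 2 := by
    rw [inner_self_eq_norm_sq_to_K, inner_self_eq_norm_sq_to_K] at hinner
    exact_mod_cast hinner
  have h3 := congrArg Real.sqrt h2
  rwa [Real.sqrt_sq (norm_nonneg _), Real.sqrt_sq (norm_nonneg _)] at h3

lemma tsum_ofReal_eq {d : ℕ} (r : ℝ) (v : Lp2 d) :
    (∑' n : Zd d, ENNReal.ofReal (wt n ^ r * ‖v n‖ ^ 2)) =
      ∑' n : Zd d, (ENNReal.ofReal (wt n)) ^ r * ENNReal.ofReal (‖v n‖ ^ 2) := by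
  congr 1; funext n
  rw [ENNReal.ofReal_mul (Real.rpow_nonneg (wt_pos n).le r),
    ENNReal.ofReal_rpow_of_pos (wt_pos n)]

lemma enorm'_zero {d : ℕ} (v : Lp2 d) : enorm' d 0 v = ENNReal.ofReal ‖v‖ := by
  have hsum : Summable (fun n : Zd d => ‖v n‖ ^ (2:ℝ)) := by
    have := (lp.memℓp v).summable (by norm_num : 0 < (2:ℝ≥0∞).toReal)
    simpa using this
  have hnorm : ‖v‖ ^ (2:ℝ) = ∑' n : Zd d, ‖v n‖ ^ (2:ℝ) := by
    have := lp.norm_rpow_eq_tsum (by norm_num : 0 < (2:ℝ≥0∞).toReal) v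
    simpa using this
  unfold enorm'
  have h1 : (∑' n : Zd d, ENNReal.ofReal (wt n ^ (0:ℝ) * ‖v n‖ ^ 2)) =
      ENNReal.ofReal (‖v‖ ^ (2:ℝ)) := by
    rw [hnorm, ENNReal.ofReal_tsum_of_nonneg (fun n => by positivity) hsum]
    congr 1; funext n
    rw [Real.rpow_zero, one_mul, Real.rpow_two]
  rw [h1, ← ENNReal.ofReal_rpow_of_nonneg (norm_nonneg v) (by norm_num), ← ENNReal.rpow_mul]
  norm_num

lemma enorm'_interp {d : ℕ} (r r' : ℝ) (hr : 0 < r) (hrr' : r < r') (v : Lp2 d) :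
    enorm' d r v ≤ (enorm' d r' v) ^ (r / r') * (enorm' d 0 v) ^ (1 - r / r') := by
  set θ : ℝ := r / r' with hθ
  have hr' : (0:ℝ) < r' := hr.trans hrr'
  have hθ0 : 0 < θ := div_pos hr hr'
  have hθ1 : θ < 1 := (div_lt_one hr').mpr hrr'
  set W : Zd d → ℝ≥0∞ := fun n => ENNReal.ofReal (wt n) with hW
  set A : Zd d → ℝ≥0∞ := fun n => ENNReal.ofReal (‖v n‖ ^ 2) with hAdef
  have hpq : Real.HolderConjugate (1/θ) (1/(1-θ)) := by
    rw [Real.holderConjugate_iff]; constructor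
    · rw [lt_div_iff₀ hθ0]; linarith
    · rw [one_div, one_div, inv_inv, inv_inv]; ring
  have hf : Measurable (fun n : Zd d => (W n ^ r' * A n) ^ θ) := measurable_of_countable _
  have hg : Measurable (fun n : Zd d => (A n) ^ (1 - θ)) := measurable_of_countable _
  have hold := ENNReal.lintegral_mul_le_Lp_mul_Lq (Measure.count : Measure (Zd d)) hpq
    hf.aemeasurable hg.aemeasurable
  rw [lintegral_count, lintegral_count, lintegral_count] at hold
  have hmul : ∀ n : Zd d, (W n ^ r' * A n) ^ θ * (A n) ^ (1 - θ) = W n ^ r * A n := by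
    intro n
    rw [ENNReal.mul_rpow_of_nonneg _ _ hθ0.le, ← ENNReal.rpow_mul, mul_assoc,
      ← ENNReal.rpow_add_of_nonneg _ _ hθ0.le (by linarith)]
    have : r' * θ = r := by rw [hθ]; field_simp
    rw [this]; norm_num
  have hfp : ∀ n : Zd d, ((W n ^ r' * A n) ^ θ) ^ (1/θ) = W n ^ r' * A n := by
    intro n; rw [← ENNReal.rpow_mul]
    rw [mul_one_div_cancel hθ0.ne', ENNReal.rpow_one]
  have hgq : ∀ n : Zd d, ((A n) ^ (1-θ)) ^ (1/(1-θ)) = A n := by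
    intro n; rw [← ENNReal.rpow_mul, mul_one_div_cancel (by linarith : (1:ℝ)-θ ≠ 0),
      ENNReal.rpow_one]
  simp only [Pi.mul_apply] at hold
  simp only [hmul, hfp, hgq] at hold
  have hone : (1:ℝ) / (1/θ) = θ := by field_simp
  have hone' : (1:ℝ) / (1/(1-θ)) = 1-θ := by field_simp
  rw [hone, hone'] at hold
  unfold enorm'
  rw [tsum_ofReal_eq, tsum_ofReal_eq r' v, tsum_ofReal_eq 0 v]
  simp only [ENNReal.rpow_zero, one_mul]
  calc (∑' n : Zd d, W n ^ r * A n) ^ ((2:ℝ)⁻¹)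
      ≤ ((∑' n : Zd d, W n ^ r' * A n) ^ θ * (∑' n : Zd d, A n) ^ (1-θ)) ^ ((2:ℝ)⁻¹) :=
        ENNReal.rpow_le_rpow hold (by norm_num)
    _ = ((∑' n : Zd d, W n ^ r' * A n) ^ ((2:ℝ)⁻¹)) ^ θ *
        ((∑' n : Zd d, A n) ^ ((2:ℝ)⁻¹)) ^ (1-θ) := by
        rw [ENNReal.mul_rpow_of_nonneg _ _ (by norm_num : (0:ℝ) ≤ (2:ℝ)⁻¹),
          ← ENNReal.rpow_mul, ← ENNReal.rpow_mul, ← ENNReal.rpow_mul, ← ENNReal.rpow_mul,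
          mul_comm θ, mul_comm (1-θ)]

lemma key_step {d : ℕ} (r r' : ℝ) (hr : 0 < r) (hrr' : r < r') (v : Lp2 d) (M : ℝ)
    (hM : ‖v‖ = M) (hM0 : 0 < M) (b t : ℝ) (hb : 0 < b) (ht : 1 ≤ t)
    (h : ENNReal.ofReal (b * t ^ r) ≤ enorm' d r v) :
    ENNReal.ofReal ((b / M ^ (1 - r / r')) ^ (r' / r) * t ^ r') ≤ enorm' d r' v := by
  set θ : ℝ := r / r' with hθ
  have hr'0 : (0:ℝ) < r' := hr.trans hrr'
  have hθ0 : 0 < θ := div_pos hr hr'0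
  have hθ1 : θ < 1 := (div_lt_one hr'0).mpr hrr'
  have ht0 : (0:ℝ) < t := lt_of_lt_of_le one_pos ht
  set E := enorm' d r' v with hE
  have h2 : ENNReal.ofReal (b * t ^ r) ≤ E ^ θ * ENNReal.ofReal (M ^ (1 - θ)) := by
    refine h.trans ((enorm'_interp r r' hr hrr' v).trans_eq ?_)
    rw [enorm'_zero, hM, ENNReal.ofReal_rpow_of_pos hM0]
  have hC0 : ENNReal.ofReal (M ^ (1 - θ)) ≠ 0 :=
    (ENNReal.ofReal_pos.mpr (by positivity)).ne'
  have h3 : ENNReal.ofReal (b * t ^ r) / ENNReal.ofReal (M ^ (1 - θ)) ≤ E ^ θ :=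
    (ENNReal.div_le_iff_le_mul (Or.inl hC0) (Or.inl ENNReal.ofReal_ne_top)).2 h2
  have h4 := ENNReal.rpow_le_rpow h3 (le_of_lt (by positivity : (0:ℝ) < 1/θ))
  rw [← ENNReal.rpow_mul, mul_one_div_cancel hθ0.ne', ENNReal.rpow_one] at h4
  refine le_trans (le_of_eq ?_) h4
  have hMpow : (0:ℝ) < M ^ (1 - θ) := by positivity
  rw [← ENNReal.ofReal_div_of_pos hMpow, ENNReal.ofReal_rpow_of_pos (by positivity)]
  congr 1
  rw [mul_div_right_comm, Real.mul_rpow (by positivity) (by positivity)]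
  have h1θ : 1/θ = r'/r := one_div_div r r'
  rw [h1θ, ← Real.rpow_mul ht0.le]
  congr 2
  field_simp

/-- Lemma 3.3. If for some `r > 0` every nonzero
`u ∈ ℋʳ_ac(ℤ^d)` satisfies `‖e^{-itH}u‖_r ≥ b_{r,u} tʳ` for `t ≥ 1`, then for
every `r' > r` every nonzero `u ∈ ℋ^{r'}_ac(ℤ^d)` satisfies
`‖e^{-itH}u‖_{r'} ≥ b_{r',u} t^{r'}` for `t ≥ 1`; moreover, for ℓ²-normalized
`u` one may take `b_{r',u} = b_{r,u}^{r'/r}`. -/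
theorem ballistic_lower_bound_bootstrap
    (d : ℕ) (hd : 1 ≤ d) (H : Lp2 d →L[ℂ] Lp2 d) (hH : IsSelfAdjoint H)
    (S : SpectralData d H) (r : ℝ) (hr : 0 < r)
    (hlow : ∀ u : Lp2 d, u ≠ 0 → memW r u → S.μ u ≪ volume →
      ∃ b : ℝ, 0 < b ∧ ∀ t : ℝ, 1 ≤ t →
        ENNReal.ofReal (b * t ^ r) ≤ enorm' d r (evol H t u))
    (r' : ℝ) (hr' : r < r') :
    (∀ u : Lp2 d, u ≠ 0 → memW r' u → S.μ u ≪ volume →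
      ∃ b' : ℝ, 0 < b' ∧ ∀ t : ℝ, 1 ≤ t →
        ENNReal.ofReal (b' * t ^ r') ≤ enorm' d r' (evol H t u)) ∧
    (∀ u : Lp2 d, ‖u‖ = 1 → memW r' u → S.μ u ≪ volume →
      ∀ b : ℝ, 0 < b →
        (∀ t : ℝ, 1 ≤ t → ENNReal.ofReal (b * t ^ r) ≤ enorm' d r (evol H t u)) →
        ∀ t : ℝ, 1 ≤ t →
          ENNReal.ofReal (b ^ (r' / r) * t ^ r') ≤ enorm' d r' (evol H t u)) := by
  constructor
  · intro u hu hmem hac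
    obtain ⟨b, hb, hbd⟩ := hlow u hu (memW_mono hr'.le hmem) hac
    have hM0 : 0 < ‖u‖ := norm_pos_iff.mpr hu
    refine ⟨(b / ‖u‖ ^ (1 - r / r')) ^ (r' / r), by positivity, fun t ht => ?_⟩
    exact key_step r r' hr hr' (evol H t u) ‖u‖ (evol_norm hH t u) hM0 b t hb ht (hbd t ht)
  · intro u hu hmem hac b hb hbd t ht
    have h := key_step r r' hr hr' (evol H t u) 1 (by rw [evol_norm hH t u, hu]) one_pos
      b t hb ht (hbd t ht)
    simpa [Real.one_rpow, div_one] using h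
end
end
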